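/- arXiv:math/0601745 — 3 statements merged into one kernel-verified Lean document; each statement's English description precedes it below -/
import Mathlib

section
/- For a finite simplicial complex X on vertex set V and an integer d ≥ 0, the following are equivalent: (i) H̃_i(X[S]; K) = 0 for every S ⊆ V and every i ≥ d (i.e., X is d-Leray over K); (ii) H̃_i(lk(X,σ); K) = 0 for every face σ ∈ X and every i ≥ d. -/
open Finset

/-- A finite abstract simplicial complex on the vertex type `V` (possibly void;
any non-void complex contains the empty face `∅` by downward closure). -/
structure SComplex (V : Type) [DecidableEq V] where
  faces : Finset (Finset V)
  down_closed : ∀ ⦃σ : Finset V⦄, σ ∈ faces → ∀ ⦃τ : Finset V⦄, τ ⊆ σ → τ ∈ faces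

namespace SComplex

variable {V : Type} [DecidableEq V]

/-- Intersection of two simplicial complexes on the same vertex set. -/
def inter (X Y : SComplex V) : SComplex V where
  faces := X.faces ∩ Y.faces
  down_closed := fun σ hσ τ hτ => by
    rw [Finset.mem_inter] at hσ ⊢
    exact ⟨X.down_closed hσ.1 hτ, Y.down_closed hσ.2 hτ⟩

/-- Union of two simplicial complexes on the same vertex set. -/
def union (X Y : SComplex V) : SComplex V where
  faces := X.faces ∪ Y.faces
  down_closed := fun σ hσ τ hτ => by
    rw [Finset.mem_union] at hσ ⊢
    exact hσ.elim (fun h => Or.inl (X.down_closed h hτ)) (fun h => Or.inr (Y.down_closed h hτ))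

/-- The induced subcomplex `X[S] = {σ ∈ X : σ ⊆ S}`. -/
def induced (X : SComplex V) (S : Finset V) : SComplex V where
  faces := X.faces.filter (fun σ => σ ⊆ S)
  down_closed := fun σ hσ τ hτ => by
    rw [Finset.mem_filter] at hσ ⊢
    exact ⟨X.down_closed hσ.1 hτ, hτ.trans hσ.2⟩

/-- The link `lk(X,A) = {τ ∈ X : τ ∩ A = ∅, τ ∪ A ∈ X}`; it is the void
complex when `A ∉ X`. -/
def link (X : SComplex V) (A : Finset V) : SComplex V where
  faces := X.faces.filter (fun τ => τ ∩ A = ∅ ∧ τ ∪ A ∈ X.faces)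
  down_closed := fun σ hσ τ hτ => by
    rw [Finset.mem_filter] at hσ ⊢
    refine ⟨X.down_closed hσ.1 hτ, Finset.subset_empty.1 ?_,
      X.down_closed hσ.2.2 (Finset.union_subset_union hτ (Finset.Subset.refl A))⟩
    rw [← hσ.2.1]
    exact Finset.inter_subset_inter hτ (Finset.Subset.refl A)

/-- The full simplex `Δ(A)` on a vertex set `A`. -/
def simplexOn (A : Finset V) : SComplex V where
  faces := A.powerset
  down_closed := fun σ hσ τ hτ =>
    Finset.mem_powerset.2 (hτ.trans (Finset.mem_powerset.1 hσ))

/-- The boundary `∂Δ(A)` of the simplex on `A` (all proper subsets of `A`). -/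
def bdSimplex (A : Finset V) : SComplex V where
  faces := A.powerset.erase A
  down_closed := fun σ hσ τ hτ => by
    rw [Finset.mem_erase, Finset.mem_powerset] at hσ ⊢
    refine ⟨fun hτA => hσ.1 ?_, hτ.trans hσ.2⟩
    subst hτA
    exact Finset.Subset.antisymm hσ.2 hτ

variable [Fintype V]

/-- Intersection of a finite family of complexes on the same vertex set. -/
def interFam {r : ℕ} (X : Fin r → SComplex V) : SComplex V where
  faces := Finset.univ.filter (fun σ => ∀ i, σ ∈ (X i).faces)
  down_closed := fun σ hσ τ hτ => by
    rw [Finset.mem_filter] at hσ ⊢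
    exact ⟨Finset.mem_univ τ, fun i => (X i).down_closed (hσ.2 i) hτ⟩

/-- Union of a finite family of complexes on the same vertex set. -/
def unionFam {r : ℕ} (X : Fin r → SComplex V) : SComplex V where
  faces := Finset.univ.filter (fun σ => ∃ i, σ ∈ (X i).faces)
  down_closed := fun σ hσ τ hτ => by
    rw [Finset.mem_filter] at hσ ⊢
    obtain ⟨-, i, hi⟩ := hσ
    exact ⟨Finset.mem_univ τ, i, (X i).down_closed hi hτ⟩

/-- The join of a family of complexes `Z i`, the `i`-th one having its vertices
inside the block `Vs i` of a partition of the vertex set: the faces are the sets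
whose trace on each block is a face of the corresponding complex. -/
def joinFam {r : ℕ} (Vs : Fin r → Finset V) (Z : Fin r → SComplex V) : SComplex V where
  faces := Finset.univ.filter (fun σ => ∀ i, σ ∩ Vs i ∈ (Z i).faces)
  down_closed := fun σ hσ τ hτ => by
    rw [Finset.mem_filter] at hσ ⊢
    exact ⟨Finset.mem_univ τ, fun i =>
      (Z i).down_closed (hσ.2 i) (Finset.inter_subset_inter hτ (Finset.Subset.refl _))⟩

/-- The Alexander dual `X* = {τ : [n] - τ ∉ X}`. -/
def dual (X : SComplex V) : SComplex V where
  faces := Finset.univ.filter (fun τ => τᶜ ∉ X.faces)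
  down_closed := fun σ hσ τ hτ => by
    rw [Finset.mem_filter] at hσ ⊢
    exact ⟨Finset.mem_univ τ, fun hc => hσ.2 (X.down_closed hc (Finset.compl_subset_compl.2 hτ))⟩

/-- The set of faces of `X` of cardinality `k` (i.e. of dimension `k - 1`). -/
def cells (X : SComplex V) (k : ℕ) : Finset (Finset V) :=
  X.faces.filter (fun σ => σ.card = k)

/-- The space of simplicial `(k-1)`-dimensional chains of `X` with coefficients
in `K`: chains are indexed by cardinality, so degree `k` chains are spanned by
the faces of cardinality `k`.  (In particular degree `0` chains are spanned by
the empty face, giving the augmented chain complex computing reduced homology.) -/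
abbrev Chains (K : Type) [Field K] (X : SComplex V) (k : ℕ) : Type := ↥(X.cells k) → K

/-- The simplicial boundary map from degree `k+1` chains (on faces of
cardinality `k+1`) to degree `k` chains.  Signs are computed with respect to a
fixed enumeration of the vertices. -/
noncomputable def boundary (K : Type) [Field K] (X : SComplex V) (k : ℕ) :
    Chains K X (k+1) →ₗ[K] Chains K X k :=
  LinearMap.pi fun τ =>
    ∑ σ : ↥(X.cells (k+1)),
      (∑ v ∈ (σ : Finset V),
        if (σ : Finset V).erase v = (τ : Finset V) then
          ((-1 : K) ^ (((σ : Finset V)).filter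
            (fun w => Fintype.equivFin V w < Fintype.equivFin V v)).card)
        else 0) • LinearMap.proj σ

/-- Cycles of the (augmented) simplicial chain complex in degree `k`
(corresponding to homological dimension `k - 1`). -/
noncomputable def cyclesSub (K : Type) [Field K] (X : SComplex V) :
    (k : ℕ) → Submodule K (Chains K X k)
  | 0 => ⊤
  | (m+1) => LinearMap.ker (boundary K X m)

/-- The reduced simplicial homology `H̃_{k-1}(X; K)` (cardinality-indexed: the
argument `k` corresponds to homological dimension `k - 1`). -/
noncomputable abbrev RedHomology (K : Type) [Field K] (X : SComplex V) (k : ℕ) : Type :=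
  ↥(cyclesSub K X k) ⧸ Submodule.comap (cyclesSub K X k).subtype
      (LinearMap.range (boundary K X k))

/-- `h̃_{k-1}(X) = dim_K H̃_{k-1}(X; K)` (cardinality-indexed, as in
`RedHomology`). -/
noncomputable def redHomDim (K : Type) [Field K] (X : SComplex V) (k : ℕ) : ℕ :=
  Module.finrank K (RedHomology K X k)

/-- `dim_K H̃_k(X; K)` for an arbitrary integer `k`; it is zero for `k ≤ -2`.
Here the argument is the genuine homological dimension `k`. -/
noncomputable def redHomDimZ (K : Type) [Field K] (X : SComplex V) (k : ℤ) : ℕ :=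
  if 0 ≤ k + 1 then redHomDim K X (k + 1).toNat else 0

/-- Chains supported on the faces of a subcomplex `A`, inside the chains of `X`. -/
noncomputable def subChains (K : Type) [Field K] (X A : SComplex V) (k : ℕ) :
    Submodule K (Chains K X k) :=
  ⨅ (σ : ↥(X.cells k)) (_ : (σ : Finset V) ∉ A.faces), LinearMap.ker (LinearMap.proj σ)

/-- Relative cycles in homological dimension `i` for the pair `(X, A)`. -/
noncomputable def relCycles (K : Type) [Field K] (X A : SComplex V) (i : ℕ) :
    Submodule K (Chains K X (i+1)) :=
  Submodule.comap (boundary K X i) (subChains K X A i)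

/-- The relative simplicial homology `H_i(X, A; K)` of the pair `(X, A)`. -/
noncomputable abbrev RelHomology (K : Type) [Field K] (X A : SComplex V) (i : ℕ) : Type :=
  ↥(relCycles K X A i) ⧸ Submodule.comap (relCycles K X A i).subtype
      (subChains K X A (i+1) ⊔ LinearMap.range (boundary K X (i+1)))

/-- `dim_K H_i(X, A; K)`. -/
noncomputable def relHomDim (K : Type) [Field K] (X A : SComplex V) (i : ℕ) : ℕ :=
  Module.finrank K (RelHomology K X A i)

/-- `X` is `d`-Leray over `K`: every induced subcomplex has vanishing reduced
homology in dimensions `≥ d`. -/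
def IsLeray (K : Type) [Field K] (d : ℕ) (X : SComplex V) : Prop :=
  ∀ S : Finset V, ∀ i : ℕ, d ≤ i → redHomDim K (X.induced S) (i + 1) = 0

/-- The Leray number `L_K(X)`: the minimal `d` such that `X` is `d`-Leray over `K`. -/
noncomputable def lerayNum (K : Type) [Field K] (X : SComplex V) : ℕ :=
  sInf {d | IsLeray K d X}

end SComplex


/-!
All homology is computed in a single chain space: functions `Finset V → K` with the augmented
boundary of the full simplex on `V`. The chains of a complex `X` are the functions supported on
its faces, and `H̃_i(X) = 0` becomes "every `i`-cycle supported on `X` bounds a chain supported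
on `X`".

Both implications go one vertex at a time, through Mayer–Vietoris for the cover of a complex `Y`
by the deletion `Y[V ∖ v]` and the closed star `st(Y, v)`, which meet in `lk(Y, v)`; the star is
a cone with apex `v`, so every cycle of the link bounds in the star.
* If `X` is `d`-Leray, so is `lk(X, v)`: for `Y = X[S ∪ {v}]` we have `lk(X, v)[S] = lk(Y, v)`,
  and `H̃_{i+1}(Y) = 0 = H̃_i(Y[V ∖ v])` forces `H̃_i(lk(Y, v)) = 0`. As
  `lk(X, σ ∪ {v}) = lk(lk(X, v), σ)`, induction on `σ` gives the links.
* If all links of `X` are acyclic in degrees `≥ d`, so are those of `X[V ∖ v]`: as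
  `lk(X[V ∖ v], σ) = lk(X, σ)[V ∖ v]`, the vanishing of `H̃_i(lk(X, σ))` and of
  `H̃_i(lk(X, σ ∪ {v}))` forces that of `H̃_i(lk(X, σ)[V ∖ v])`. Deleting vertices one at a time
  and taking `σ = ∅` gives the induced subcomplexes.
-/

namespace SComplex

noncomputable section

section Faces

variable {V : Type} [DecidableEq V]

def closedStar (Y : SComplex V) (v : V) : SComplex V where
  faces := Y.faces.filter fun τ => insert v τ ∈ Y.faces
  down_closed _ hσ _ hτ := by
    rw [mem_filter] at hσ ⊢
    exact ⟨Y.down_closed hσ.1 hτ, Y.down_closed hσ.2 (insert_subset_insert v hτ)⟩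

@[ext]
theorem ext {X Y : SComplex V} (h : X.faces = Y.faces) : X = Y := by
  cases X
  cases Y
  simpa using h

@[simp]
theorem mem_inter_faces {X Y : SComplex V} {τ : Finset V} :
    τ ∈ (X.inter Y).faces ↔ τ ∈ X.faces ∧ τ ∈ Y.faces :=
  mem_inter

@[simp]
theorem mem_union_faces {X Y : SComplex V} {τ : Finset V} :
    τ ∈ (X.union Y).faces ↔ τ ∈ X.faces ∨ τ ∈ Y.faces :=
  mem_union

@[simp]
theorem mem_induced_faces {X : SComplex V} {S τ : Finset V} :
    τ ∈ (X.induced S).faces ↔ τ ∈ X.faces ∧ τ ⊆ S :=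
  mem_filter

@[simp]
theorem mem_link_faces {X : SComplex V} {A τ : Finset V} :
    τ ∈ (X.link A).faces ↔ τ ∈ X.faces ∧ Disjoint τ A ∧ τ ∪ A ∈ X.faces := by
  simp [link, disjoint_iff_inter_eq_empty]

@[simp]
theorem mem_closedStar_faces {Y : SComplex V} {v : V} {τ : Finset V} :
    τ ∈ (Y.closedStar v).faces ↔ τ ∈ Y.faces ∧ insert v τ ∈ Y.faces :=
  mem_filter

theorem induced_induced (X : SComplex V) (S T : Finset V) :
    (X.induced S).induced T = X.induced (S ∩ T) := by
  ext τ
  simp [subset_inter_iff, and_assoc]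

theorem link_empty (X : SComplex V) : X.link ∅ = X := by
  ext τ
  simp

theorem link_link (X : SComplex V) {A B : Finset V} (h : Disjoint A B) :
    (X.link A).link B = X.link (A ∪ B) := by
  ext τ
  simp only [mem_link_faces, disjoint_union_left, disjoint_union_right, h.symm, and_true,
    union_right_comm τ B A, ← union_assoc]
  constructor
  · rintro ⟨⟨hτ, hτA, -⟩, hτB, -, -, hτAB⟩
    exact ⟨hτ, ⟨hτA, hτB⟩, hτAB⟩
  · rintro ⟨hτ, ⟨hτA, hτB⟩, hτAB⟩
    exact ⟨⟨hτ, hτA, X.down_closed hτAB subset_union_left⟩, hτB,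
      X.down_closed hτAB (union_subset_union_left subset_union_left), hτA, hτAB⟩

theorem link_faces_eq_empty {X : SComplex V} {A : Finset V} (hA : A ∉ X.faces) :
    (X.link A).faces = ∅ :=
  eq_empty_of_forall_notMem fun _ hτ =>
    hA (X.down_closed (mem_link_faces.1 hτ).2.2 subset_union_right)

theorem induced_link {X : SComplex V} {S σ : Finset V} (h : σ ⊆ S) :
    (X.induced S).link σ = (X.link σ).induced S := by
  ext τ
  simp only [mem_link_faces, mem_induced_faces, union_subset_iff]
  tauto

theorem induced_insert_link_singleton (X : SComplex V) (v : V) (S : Finset V) :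
    (X.induced (insert v S)).link {v} = (X.link {v}).induced S := by
  ext τ
  simp only [mem_link_faces, mem_induced_faces, disjoint_singleton_right, union_singleton]
  constructor
  · rintro ⟨⟨hτ, -⟩, hv, hvτ, hvS⟩
    exact ⟨⟨hτ, hv, hvτ⟩, (insert_subset_insert_iff hv).1 hvS⟩
  · rintro ⟨⟨hτ, hv, hvτ⟩, hS⟩
    exact ⟨⟨hτ, hS.trans (subset_insert v S)⟩, hv, hvτ, insert_subset_insert v hS⟩

variable [Fintype V]

theorem induced_univ (X : SComplex V) : X.induced univ = X := by
  ext τ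
  simp

theorem induced_compl_singleton_union_closedStar (Y : SComplex V) (v : V) :
    (Y.induced {v}ᶜ).union (Y.closedStar v) = Y := by
  ext τ
  simp only [mem_union_faces, mem_induced_faces, mem_closedStar_faces, subset_compl_singleton]
  by_cases hv : v ∈ τ
  · simp [hv, insert_eq_of_mem hv]
  · simp +contextual [hv]

theorem induced_compl_singleton_inter_closedStar (Y : SComplex V) (v : V) :
    (Y.induced {v}ᶜ).inter (Y.closedStar v) = Y.link {v} := by
  ext τ
  simp only [mem_inter_faces, mem_link_faces, mem_induced_faces, mem_closedStar_faces,
    subset_compl_singleton, disjoint_singleton_right, union_singleton]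
  tauto

end Faces

section Chains

variable {V : Type} [DecidableEq V] (K : Type) [Field K]

theorem mem_cells {X : SComplex V} {k : ℕ} {σ : Finset V} :
    σ ∈ X.cells k ↔ σ ∈ X.faces ∧ σ.card = k :=
  mem_filter

def chainsIn (X : SComplex V) (k : ℕ) : Submodule K (Finset V → K) :=
  Submodule.pi (↑(X.cells k))ᶜ fun _ => ⊥

variable {K}

theorem mem_chainsIn {X : SComplex V} {k : ℕ} {z : Finset V → K} :
    z ∈ chainsIn K X k ↔ ∀ σ ∉ X.cells k, z σ = 0 := by
  simp [chainsIn, Submodule.mem_pi]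

theorem chainsIn_mono {X Y : SComplex V} (h : X.faces ⊆ Y.faces) (k : ℕ) :
    chainsIn K X k ≤ chainsIn K Y k := fun _ hz =>
  mem_chainsIn.2 fun σ hσ => mem_chainsIn.1 hz σ fun hX => hσ (mem_cells.2
    ⟨h (mem_cells.1 hX).1, (mem_cells.1 hX).2⟩)

theorem chainsIn_inter (X Y : SComplex V) (k : ℕ) :
    chainsIn K (X.inter Y) k = chainsIn K X k ⊓ chainsIn K Y k := by
  ext z
  simp only [Submodule.mem_inf, mem_chainsIn, mem_cells, mem_inter_faces]
  constructor
  · intro h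
    exact ⟨fun σ hσ => h σ fun h' => hσ ⟨h'.1.1, h'.2⟩,
      fun σ hσ => h σ fun h' => hσ ⟨h'.1.2, h'.2⟩⟩
  · rintro ⟨hX, hY⟩ σ hσ
    by_cases hσX : σ ∈ X.faces ∧ σ.card = k
    · exact hY σ fun hσY => hσ ⟨⟨hσX.1, hσY.1⟩, hσX.2⟩
    · exact hX σ hσX

theorem chainsIn_union (X Y : SComplex V) (k : ℕ) :
    chainsIn K (X.union Y) k = chainsIn K X k ⊔ chainsIn K Y k := by
  refine le_antisymm (fun z hz => ?_)
    (sup_le (chainsIn_mono subset_union_left k) (chainsIn_mono subset_union_right k))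
  rw [mem_chainsIn] at hz
  let x : Finset V → K := fun σ => if σ ∈ X.faces then z σ else 0
  refine Submodule.mem_sup.2 ⟨x, mem_chainsIn.2 fun σ hσ => ?_, z - x,
    mem_chainsIn.2 fun σ hσ => ?_, add_sub_cancel x z⟩
  · by_cases hσX : σ ∈ X.faces
    · simp only [x, if_pos hσX]
      exact hz σ fun h => hσ (mem_cells.2 ⟨hσX, (mem_cells.1 h).2⟩)
    · simp only [x, if_neg hσX]
  · by_cases hσX : σ ∈ X.faces
    · simp [x, hσX]
    · simp only [Pi.sub_apply, x, if_neg hσX, sub_zero]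
      refine hz σ fun h => ?_
      obtain ⟨hXY, hcard⟩ := mem_cells.1 h
      exact hσ (mem_cells.2 ⟨(mem_union.1 hXY).resolve_left hσX, hcard⟩)

variable (K)

def extendChain (X : SComplex V) (k : ℕ) : Chains K X k →ₗ[K] (Finset V → K) :=
  Function.ExtendByZero.linearMap K Subtype.val

variable {K}

theorem extendChain_apply_coe {X : SComplex V} {k : ℕ} (c : Chains K X k) (σ : X.cells k) :
    extendChain K X k c σ = c σ :=
  Subtype.val_injective.extend_apply c 0 σ

theorem extendChain_apply_of_notMem {X : SComplex V} {k : ℕ} (c : Chains K X k)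
    {σ : Finset V} (hσ : σ ∉ X.cells k) : extendChain K X k c σ = 0 :=
  Function.extend_apply' _ _ _ fun ⟨τ, hτ⟩ => hσ (hτ ▸ τ.2)

theorem extendChain_injective (X : SComplex V) (k : ℕ) :
    Function.Injective (extendChain K X k) := fun c c' h =>
  funext fun σ => by simpa only [extendChain_apply_coe] using congrFun h σ

theorem range_extendChain (X : SComplex V) (k : ℕ) :
    LinearMap.range (extendChain K X k) = chainsIn K X k := by
  refine le_antisymm ?_ fun z hz => ⟨fun σ => z σ, funext fun σ => ?_⟩
  · rintro _ ⟨c, rfl⟩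
    exact mem_chainsIn.2 fun σ hσ => extendChain_apply_of_notMem c hσ
  · by_cases hσ : σ ∈ X.cells k
    · exact extendChain_apply_coe (X := X) _ ⟨σ, hσ⟩
    · rw [extendChain_apply_of_notMem _ hσ, mem_chainsIn.1 hz σ hσ]

end Chains

section TotalBoundary

variable {V : Type} [Fintype V] (K : Type) [Field K]

def vertexSign (σ : Finset V) (v : V) : K :=
  (-1) ^ #{w ∈ σ | Fintype.equivFin V w < Fintype.equivFin V v}

variable {K}

theorem vertexSign_mul_self (σ : Finset V) (v : V) :
    vertexSign K σ v * vertexSign K σ v = 1 := by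
  rw [vertexSign, ← mul_pow, neg_one_mul, neg_neg, one_pow]

variable [DecidableEq V]

theorem vertexSign_erase_of_lt {σ : Finset V} {u w : V} (hu : u ∈ σ)
    (h : Fintype.equivFin V u < Fintype.equivFin V w) :
    vertexSign K (σ.erase u) w = -vertexSign K σ w := by
  have hmem : u ∈ σ.filter (fun x => Fintype.equivFin V x < Fintype.equivFin V w) :=
    mem_filter.2 ⟨hu, h⟩
  rw [vertexSign, vertexSign, filter_erase, ← card_erase_add_one hmem, pow_succ]
  ring

theorem vertexSign_erase_of_gt {σ : Finset V} {u w : V}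
    (h : Fintype.equivFin V w < Fintype.equivFin V u) :
    vertexSign K (σ.erase u) w = vertexSign K σ w := by
  rw [vertexSign, vertexSign, filter_erase, erase_eq_of_notMem]
  simpa using fun _ => h.le

theorem vertexSign_mul_vertexSign_erase {σ : Finset V} {u w : V} (hu : u ∈ σ) (hw : w ∈ σ)
    (huw : u ≠ w) :
    vertexSign K σ u * vertexSign K (σ.erase u) w =
      -(vertexSign K σ w * vertexSign K (σ.erase w) u) := by
  wlog h : Fintype.equivFin V u < Fintype.equivFin V w generalizing u w
  · have hwu : Fintype.equivFin V w < Fintype.equivFin V u :=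
      lt_of_le_of_ne (not_lt.1 h) ((Fintype.equivFin V).injective.ne huw.symm)
    linear_combination this hw hu huw.symm hwu
  rw [vertexSign_erase_of_lt hu h, vertexSign_erase_of_gt h]
  ring

variable (K)

def totalBoundary : (Finset V → K) →ₗ[K] (Finset V → K) :=
  LinearMap.pi fun τ => ∑ u ∈ τᶜ, vertexSign K (insert u τ) u • LinearMap.proj (insert u τ)

variable {K}

theorem totalBoundary_apply (z : Finset V → K) (τ : Finset V) :
    totalBoundary K z τ = ∑ u ∈ τᶜ, vertexSign K (insert u τ) u * z (insert u τ) := by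
  simp [totalBoundary]

theorem totalBoundary_totalBoundary (z : Finset V → K) :
    totalBoundary K (totalBoundary K z) = 0 := by
  funext τ
  simp only [totalBoundary_apply, mul_sum, compl_insert, Pi.zero_apply]
  rw [← sum_finset_product' τᶜ.offDiag _ _ fun p => by simp [mem_offDiag, and_comm, eq_comm]]
  -- the face `τ ∪ {u, w}` is reached through `(u, w)` and `(w, u)`, with opposite signs
  refine sum_involution (fun p _ => p.swap) (fun ⟨u, w⟩ hp => ?_)
    (fun ⟨u, w⟩ hp _ h => (mem_offDiag.1 hp).2.2 (congrArg Prod.fst h).symm)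
    (fun p hp => by simpa [mem_offDiag, ne_comm, and_left_comm] using hp) (fun p _ => p.swap_swap)
  obtain ⟨hu, hw, huw⟩ := mem_offDiag.1 hp
  rw [mem_compl] at hu hw
  have hw' : w ∉ insert u τ := by simp [hw, Ne.symm huw]
  have key := vertexSign_mul_vertexSign_erase (K := K) (σ := insert w (insert u τ))
    (mem_insert_of_mem (mem_insert_self u τ)) (mem_insert_self w _) huw
  rw [erase_insert hw', erase_insert_of_ne huw.symm, erase_insert hu] at key
  simp only [Prod.swap_prod_mk]
  rw [insert_comm u w τ]
  linear_combination z (insert w (insert u τ)) * key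

theorem totalBoundary_mem_chainsIn {X : SComplex V} {k : ℕ} {z : Finset V → K}
    (hz : z ∈ chainsIn K X (k + 1)) : totalBoundary K z ∈ chainsIn K X k := by
  refine mem_chainsIn.2 fun τ hτ => ?_
  rw [totalBoundary_apply]
  refine sum_eq_zero fun u hu => ?_
  rw [mem_chainsIn.1 hz, mul_zero]
  intro h
  obtain ⟨huτ, hcard⟩ := mem_cells.1 h
  rw [card_insert_of_notMem (mem_compl.1 hu), add_left_inj] at hcard
  exact hτ (mem_cells.2 ⟨X.down_closed huτ (subset_insert u τ), hcard⟩)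

variable (K)

def cone (v : V) : (Finset V → K) →ₗ[K] (Finset V → K) :=
  LinearMap.pi fun σ => if v ∈ σ then vertexSign K σ v • LinearMap.proj (σ.erase v) else 0

variable {K}

theorem cone_apply (v : V) (z : Finset V → K) (σ : Finset V) :
    cone K v z σ = if v ∈ σ then vertexSign K σ v * z (σ.erase v) else 0 := by
  by_cases hv : v ∈ σ <;> simp [cone, hv]

theorem totalBoundary_cone_add_cone_totalBoundary (v : V) (z : Finset V → K) :
    totalBoundary K (cone K v z) + cone K v (totalBoundary K z) = z := by
  funext τ
  simp only [Pi.add_apply, totalBoundary_apply, cone_apply]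
  by_cases hv : v ∈ τ
  -- the `u = v` term of `cone (∂z) τ` is `z τ`; each other term cancels one of `∂(cone z) τ`
  · have hvτ : vertexSign K τ v * vertexSign K τ v = 1 := vertexSign_mul_self τ v
    rw [if_pos hv, compl_erase, sum_insert (by simpa using hv), insert_erase hv, mul_add,
      ← mul_assoc, hvτ, one_mul, add_comm (z τ), ← add_assoc, mul_sum, ← sum_add_distrib,
      add_eq_right]
    refine sum_eq_zero fun u hu => ?_
    rw [mem_compl] at hu
    have huv : u ≠ v := fun h => hu (h ▸ hv)
    have key := vertexSign_mul_vertexSign_erase (K := K) (σ := insert u τ)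
      (mem_insert_self u τ) (mem_insert_of_mem hv) huv
    have hσv := vertexSign_mul_self (K := K) (insert u τ) v
    rw [erase_insert hu, erase_insert_of_ne huv] at key
    rw [if_pos (mem_insert_of_mem hv), erase_insert_of_ne huv]
    linear_combination (vertexSign K τ v * vertexSign K (insert u τ) v *
        z (insert u (τ.erase v))) * key
      - (vertexSign K (insert u τ) u * vertexSign K (insert u τ) v *
        z (insert u (τ.erase v))) * hvτ
      - (vertexSign K τ v * vertexSign K (insert u (τ.erase v)) u *
        z (insert u (τ.erase v))) * hσv
  · rw [if_neg hv, add_zero, sum_eq_single_of_mem v (mem_compl.2 hv),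
      if_pos (mem_insert_self v τ), erase_insert hv, ← mul_assoc, vertexSign_mul_self, one_mul]
    intro u _ huv
    rw [if_neg (by simp [hv, Ne.symm huv]), mul_zero]

theorem totalBoundary_cone_of_cycle {v : V} {z : Finset V → K} (hz : totalBoundary K z = 0) :
    totalBoundary K (cone K v z) = z := by
  simpa [hz] using totalBoundary_cone_add_cone_totalBoundary v z

theorem cone_mem_chainsIn {Y : SComplex V} {v : V} {k : ℕ} {z : Finset V → K}
    (hz : z ∈ chainsIn K (Y.link {v}) k) : cone K v z ∈ chainsIn K (Y.closedStar v) (k + 1) := by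
  refine mem_chainsIn.2 fun σ hσ => ?_
  by_cases hv : v ∈ σ
  · rw [cone_apply, if_pos hv, mem_chainsIn.1 hz, mul_zero]
    intro h
    obtain ⟨hlink, hcard⟩ := mem_cells.1 h
    have hσY : σ ∈ Y.faces := by
      simpa [union_singleton, insert_erase hv] using (mem_link_faces.1 hlink).2.2
    refine hσ (mem_cells.2 ⟨mem_closedStar_faces.2 ⟨hσY, by rwa [insert_eq_of_mem hv]⟩, ?_⟩)
    rw [← card_erase_add_one hv, hcard]
  · rw [cone_apply, if_neg hv]

end TotalBoundary

section Homology

variable {V : Type} [DecidableEq V] [Fintype V] (K : Type) [Field K]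

def cyclesIn (X : SComplex V) (k : ℕ) : Submodule K (Finset V → K) :=
  chainsIn K X k ⊓ LinearMap.ker (totalBoundary K)

def boundariesIn (X : SComplex V) (k : ℕ) : Submodule K (Finset V → K) :=
  (chainsIn K X (k + 1)).map (totalBoundary K)

variable {K}

theorem cyclesIn_link_le_boundariesIn_closedStar (Y : SComplex V) (v : V) (k : ℕ) :
    cyclesIn K (Y.link {v}) k ≤ boundariesIn K (Y.closedStar v) k :=
  fun z ⟨hz, hz0⟩ => ⟨cone K v z, cone_mem_chainsIn hz, totalBoundary_cone_of_cycle hz0⟩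

theorem sum_sum_erase_eq_sum_compl {M : Type*} [AddCommMonoid M] (g : Finset V → V → M)
    (τ : Finset V) :
    ∑ σ, ∑ v ∈ σ, (if σ.erase v = τ then g σ v else 0) = ∑ u ∈ τᶜ, g (insert u τ) u := by
  simp_rw [← sum_filter]
  rw [sum_comm' (t' := τᶜ) (s' := fun u => {insert u τ})]
  · simp
  · simp only [mem_univ, mem_filter, true_and, mem_singleton, mem_compl]
    intro σ v
    constructor
    · rintro ⟨hv, rfl⟩
      exact ⟨(insert_erase hv).symm, notMem_erase v σ⟩
    · rintro ⟨rfl, hv⟩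
      exact ⟨mem_insert_self v τ, erase_insert hv⟩

theorem extendChain_comp_boundary (X : SComplex V) (k : ℕ) :
    extendChain K X k ∘ₗ boundary K X k = totalBoundary K ∘ₗ extendChain K X (k + 1) := by
  refine LinearMap.ext fun c => funext fun τ => ?_
  simp only [LinearMap.comp_apply]
  by_cases hτ : τ ∈ X.cells k
  · rw [extendChain_apply_coe (X := X) _ ⟨τ, hτ⟩, totalBoundary_apply,
      ← sum_sum_erase_eq_sum_compl (fun σ v => vertexSign K σ v * extendChain K X (k + 1) c σ),
      ← sum_subset (subset_univ (X.cells (k + 1))) fun σ _ hσ => by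
        simp [extendChain_apply_of_notMem c hσ], ← sum_coe_sort]
    simp only [boundary, LinearMap.pi_apply, LinearMap.sum_apply, LinearMap.smul_apply,
      LinearMap.proj_apply, smul_eq_mul, sum_mul, ite_mul, zero_mul, extendChain_apply_coe,
      vertexSign]
  · rw [extendChain_apply_of_notMem _ hτ]
    exact (mem_chainsIn.1 (totalBoundary_mem_chainsIn
      (range_extendChain (K := K) X (k + 1) ▸ LinearMap.mem_range_self _ c)) τ hτ).symm

theorem redHomDim_succ_eq_zero_iff (X : SComplex V) (k : ℕ) :
    redHomDim K X (k + 1) = 0 ↔ cyclesIn K X (k + 1) ≤ boundariesIn K X (k + 1) := by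
  have h0 : redHomDim K X (k + 1) = 0 ↔
      LinearMap.ker (boundary K X k) ≤ LinearMap.range (boundary K X (k + 1)) := by
    rw [redHomDim, Module.finrank_zero_iff, Submodule.Quotient.subsingleton_iff]
    exact Submodule.comap_subtype_eq_top
  have hcycles : (LinearMap.ker (boundary K X k)).map (extendChain K X (k + 1)) =
      cyclesIn K X (k + 1) := by
    rw [← LinearMap.ker_comp_of_ker_eq_bot _ (LinearMap.ker_eq_bot.2 (extendChain_injective X k)),
      extendChain_comp_boundary, LinearMap.ker_comp, Submodule.map_comap_eq, range_extendChain,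
      cyclesIn]
  have hboundaries : (LinearMap.range (boundary K X (k + 1))).map (extendChain K X (k + 1)) =
      boundariesIn K X (k + 1) := by
    rw [← LinearMap.range_comp, extendChain_comp_boundary, LinearMap.range_comp,
      range_extendChain, boundariesIn]
  rw [h0, ← Submodule.map_le_map_iff_of_injective (extendChain_injective X (k + 1)), hcycles,
    hboundaries]

theorem redHomDim_link_of_notMem {X : SComplex V} {A : Finset V} (hA : A ∉ X.faces) (k : ℕ) :
    redHomDim K (X.link A) (k + 1) = 0 := by
  rw [redHomDim_succ_eq_zero_iff]
  rintro z ⟨hz, -⟩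
  have hz0 : z = 0 := funext fun σ => mem_chainsIn.1 hz σ fun h => by
    simp [mem_cells, link_faces_eq_empty hA] at h
  exact hz0 ▸ zero_mem _

theorem redHomDim_eq_zero_of_union_of_inter {A B : SComplex V} {i : ℕ}
    (hAB : redHomDim K (A.union B) (i + 1) = 0) (hAiB : redHomDim K (A.inter B) (i + 1) = 0) :
    redHomDim K A (i + 1) = 0 := by
  rw [redHomDim_succ_eq_zero_iff] at *
  rintro z ⟨hzA, hz⟩
  obtain ⟨w, hw, rfl⟩ := hAB ⟨chainsIn_mono subset_union_left _ hzA, hz⟩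
  rw [chainsIn_union] at hw
  obtain ⟨a, ha, b, hb, rfl⟩ := Submodule.mem_sup.1 hw
  -- `∂b = z - ∂a` is a cycle on both `A` and `B`
  have hbA : totalBoundary K b ∈ chainsIn K A (i + 1) := by
    simpa using sub_mem hzA (totalBoundary_mem_chainsIn ha)
  have hbAB : totalBoundary K b ∈ cyclesIn K (A.inter B) (i + 1) :=
    ⟨by rw [chainsIn_inter]; exact ⟨hbA, totalBoundary_mem_chainsIn hb⟩,
      totalBoundary_totalBoundary b⟩
  obtain ⟨u, hu, hub⟩ := hAiB hbAB
  exact ⟨a + u, add_mem ha (chainsIn_mono inter_subset_left _ hu), by rw [map_add, map_add, hub]⟩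

theorem redHomDim_inter_eq_zero {A B : SComplex V} {i : ℕ}
    (hAB : redHomDim K (A.union B) (i + 1 + 1) = 0) (hA : redHomDim K A (i + 1) = 0)
    (hB : cyclesIn K (A.inter B) (i + 1) ≤ boundariesIn K B (i + 1)) :
    redHomDim K (A.inter B) (i + 1) = 0 := by
  rw [redHomDim_succ_eq_zero_iff] at *
  intro z hz
  obtain ⟨a, ha, rfl⟩ := hA ⟨chainsIn_mono inter_subset_left _ hz.1, hz.2⟩
  obtain ⟨b, hb, hba⟩ := hB hz
  obtain ⟨w, hw, hwab⟩ := hAB ⟨sub_mem (chainsIn_mono subset_union_left _ ha)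
    (chainsIn_mono subset_union_right _ hb), LinearMap.mem_ker.2 (by rw [map_sub, hba, sub_self])⟩
  rw [chainsIn_union] at hw
  obtain ⟨a', ha', b', hb', rfl⟩ := Submodule.mem_sup.1 hw
  -- `a - ∂a'` still bounds `z`, and it equals `b + ∂b'`, so it lies on both `A` and `B`
  have hab : a - totalBoundary K a' = b + totalBoundary K b' := by
    rw [map_add] at hwab
    linear_combination -hwab
  refine ⟨a - totalBoundary K a', ?_, by rw [map_sub, totalBoundary_totalBoundary, sub_zero]⟩
  rw [chainsIn_inter]
  refine ⟨sub_mem ha (totalBoundary_mem_chainsIn ha'), ?_⟩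
  rw [hab]
  exact add_mem hb (totalBoundary_mem_chainsIn hb')

end Homology

section Leray

variable {V : Type} [DecidableEq V] [Fintype V] {K : Type} [Field K] {d : ℕ}

-- `σ` ranges over all vertex sets: at a non-face the link is void, see `redHomDim_link_of_notMem`.
variable (K) in
def LinksAcyclic (d : ℕ) (X : SComplex V) : Prop :=
  ∀ σ : Finset V, ∀ i : ℕ, d ≤ i → redHomDim K (X.link σ) (i + 1) = 0

theorem IsLeray.link_singleton {X : SComplex V} (h : IsLeray K d X) (v : V) :
    IsLeray K d (X.link {v}) := by
  intro S i hi
  rw [← induced_insert_link_singleton, ← induced_compl_singleton_inter_closedStar]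
  refine redHomDim_inter_eq_zero ?_ ?_ ?_
  · rw [induced_compl_singleton_union_closedStar]
    exact h _ (i + 1) (by omega)
  · rw [induced_induced]
    exact h _ i hi
  · rw [induced_compl_singleton_inter_closedStar]
    exact cyclesIn_link_le_boundariesIn_closedStar _ v _

theorem IsLeray.linksAcyclic {X : SComplex V} (h : IsLeray K d X) : LinksAcyclic K d X := by
  intro σ
  induction σ using Finset.induction_on generalizing X with
  | empty =>
    rw [link_empty, ← induced_univ X]
    exact h univ
  | insert v σ hv ih =>
    rw [insert_eq, ← link_link X (disjoint_singleton_left.2 hv)]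
    exact ih (h.link_singleton v)

theorem LinksAcyclic.induced_compl_singleton {X : SComplex V} (h : LinksAcyclic K d X) (v : V) :
    LinksAcyclic K d (X.induced {v}ᶜ) := by
  intro σ i hi
  by_cases hv : v ∈ σ
  · exact redHomDim_link_of_notMem
      (fun hσ => subset_compl_singleton.1 (mem_induced_faces.1 hσ).2 hv) i
  rw [induced_link (subset_compl_singleton.2 hv)]
  refine redHomDim_eq_zero_of_union_of_inter (B := (X.link σ).closedStar v) ?_ ?_
  · rw [induced_compl_singleton_union_closedStar]
    exact h σ i hi
  · rw [induced_compl_singleton_inter_closedStar, link_link X (disjoint_singleton_right.2 hv)]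
    exact h _ i hi

theorem LinksAcyclic.induced {X : SComplex V} (h : LinksAcyclic K d X) (S : Finset V) :
    LinksAcyclic K d (X.induced S) := by
  rw [← compl_compl S]
  induction Sᶜ using Finset.induction_on with
  | empty => rwa [compl_empty, induced_univ]
  | insert v R _ ih =>
    rw [insert_eq, compl_union, inter_comm, ← induced_induced]
    exact ih.induced_compl_singleton v

theorem LinksAcyclic.isLeray {X : SComplex V} (h : LinksAcyclic K d X) : IsLeray K d X :=
  fun S i hi => by
    rw [← link_empty (X.induced S)]
    exact h.induced S ∅ i hi

theorem isLeray_iff_linksAcyclic {X : SComplex V} : IsLeray K d X ↔ LinksAcyclic K d X :=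
  ⟨IsLeray.linksAcyclic, LinksAcyclic.isLeray⟩

end Leray

end

end SComplex

open SComplex in
/-- **Proposition.** For a finite simplicial complex `X` on the vertex set `V`
and `d ≥ 0`, the following are equivalent: (i) `X` is `d`-Leray over `K`, i.e.
`H̃_i(X[S]; K) = 0` for all `S ⊆ V` and `i ≥ d`; (ii) `H̃_i(lk(X,σ); K) = 0`
for every face `σ ∈ X` and every `i ≥ d`.
(Recall that `redHomDim K Z (i+1) = dim_K H̃_i(Z; K)`, cardinality-indexed.) -/
theorem leray_iff_links {V : Type} [DecidableEq V] [Fintype V]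
    (K : Type) [Field K] (X : SComplex V) (d : ℕ) :
    (∀ S : Finset V, ∀ i : ℕ, d ≤ i → redHomDim K (X.induced S) (i + 1) = 0) ↔
    (∀ σ ∈ X.faces, ∀ i : ℕ, d ≤ i → redHomDim K (X.link σ) (i + 1) = 0) := by
  have links_iff : (∀ σ ∈ X.faces, ∀ i : ℕ, d ≤ i → redHomDim K (X.link σ) (i + 1) = 0) ↔
      LinksAcyclic K d X :=
    ⟨fun h σ i hi => if hσ : σ ∈ X.faces then h σ hσ i hi else redHomDim_link_of_notMem hσ i,
      fun h σ _ => h σ⟩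
  rw [links_iff]
  exact isLeray_iff_linksAcyclic
end

section
/- Let F be a finite family of sets and K a field. Then the Helly number of F satisfies h(F) ≤ 1 + L_K(N(F)), where N(F) is the nerve of F. -/
open Finset

open scoped Classical in
/-- The nerve `N(F)` of a finite family of sets `F = (F i)_{i : ι}`: the
simplicial complex on the vertex set `ι` whose faces are the subfamilies with
nonempty intersection. -/
noncomputable def nerve {α ι : Type} [Fintype ι] [DecidableEq ι] (F : ι → Set α) :
    SComplex ι where
  faces := Finset.univ.filter (fun σ => (⋂ i ∈ σ, F i).Nonempty)
  down_closed := fun σ hσ τ hτ => by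
    rw [Finset.mem_filter] at hσ ⊢
    refine ⟨Finset.mem_univ τ, hσ.2.mono fun x hx => ?_⟩
    exact Set.mem_iInter₂.2 fun i hi => Set.mem_iInter₂.1 hx i (hτ hi)

/-- The Helly number `h(F)` of a finite family of sets `F`: the minimal `h ≥ 1`
such that any subfamily, all of whose subfamilies of cardinality at most `h`
have nonempty intersection, itself has nonempty intersection. -/
noncomputable def hellyNum {α ι : Type} [Fintype ι] [DecidableEq ι] (F : ι → Set α) : ℕ :=
  sInf {h : ℕ | 0 < h ∧ ∀ G : Finset ι,
    (∀ G' ⊆ G, G'.card ≤ h → (⋂ i ∈ G', F i).Nonempty) → (⋂ i ∈ G, F i).Nonempty}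

namespace HellyAux

open SComplex

variable {V : Type} [DecidableEq V] [Fintype V]

/-- The sign exponent used in the boundary map. -/
noncomputable def sg (A : Finset V) (v : V) : ℕ :=
  (A.filter (fun w => Fintype.equivFin V w < Fintype.equivFin V v)).card

lemma sg_erase_of_lt (A : Finset V) {u v : V} (hv : v ∈ A)
    (h : Fintype.equivFin V v < Fintype.equivFin V u) :
    sg (A.erase v) u + 1 = sg A u := by
  unfold sg
  rw [Finset.filter_erase]
  rw [Finset.card_erase_of_mem (by simp [Finset.mem_filter, hv, h])]
  have hpos : 0 < (A.filter (fun w => Fintype.equivFin V w < Fintype.equivFin V u)).card :=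
    Finset.card_pos.2 ⟨v, by simp [Finset.mem_filter, hv, h]⟩
  omega

lemma sg_erase_of_not_lt (A : Finset V) {u v : V}
    (h : ¬ Fintype.equivFin V v < Fintype.equivFin V u) :
    sg (A.erase v) u = sg A u := by
  unfold sg
  rw [Finset.filter_erase, Finset.erase_eq_of_notMem (by simp [Finset.mem_filter, h])]

lemma sign_cancel_aux (K : Type) [Field K] (A : Finset V) {u v : V} (hu : u ∈ A)
    (h : Fintype.equivFin V u < Fintype.equivFin V v) :
    (-1 : K) ^ (sg (A.erase v) u + sg A v) + (-1 : K) ^ (sg (A.erase u) v + sg A u) = 0 := by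
  have h1 : sg (A.erase v) u = sg A u := sg_erase_of_not_lt A (asymm h)
  have h2 : sg (A.erase u) v + 1 = sg A v := sg_erase_of_lt A hu h
  rw [h1, ← h2]
  rw [show sg A u + (sg (A.erase u) v + 1) = (sg (A.erase u) v + sg A u) + 1 by ring]
  rw [pow_succ]
  ring

lemma sign_cancel (K : Type) [Field K] (A : Finset V) {u v : V} (hu : u ∈ A) (hv : v ∈ A)
    (huv : u ≠ v) :
    (-1 : K) ^ (sg (A.erase v) u + sg A v) + (-1 : K) ^ (sg (A.erase u) v + sg A u) = 0 := by
  have hne : Fintype.equivFin V u ≠ Fintype.equivFin V v :=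
    fun h => huv ((Fintype.equivFin V).injective h)
  rcases hne.lt_or_gt with h | h
  · exact sign_cancel_aux K A hu h
  · rw [add_comm]
    exact sign_cancel_aux K A hv h

lemma erase_erase_eq_iff {A τ : Finset V} {v u : V} (hv : v ∈ A) (hu : u ∈ A)
    (hτ : τ ⊆ A) : (A.erase v).erase u = τ ↔ A \ τ = {v, u} := by
  have h1 : (A.erase v).erase u = A \ {v, u} := by
    rw [Finset.erase_eq, Finset.erase_eq, sdiff_sdiff_left]
    congr 1
  rw [h1]
  have hsub : ({v, u} : Finset V) ⊆ A := by
    intro x hx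
    rcases Finset.mem_insert.1 hx with rfl | hx
    · exact hv
    · rw [Finset.mem_singleton.1 hx]; exact hu
  exact sdiff_eq_comm hsub hτ

/-- Leray property always holds for `d = |V|`. -/
lemma isLeray_card (K : Type) [Field K] (X : SComplex V) :
    IsLeray K (Fintype.card V) X := by
  intro S i hi
  have hc : (X.induced S).cells (i + 1) = ∅ := by
    rw [Finset.eq_empty_iff_forall_notMem]
    intro σ hσ
    simp only [SComplex.cells, Finset.mem_filter] at hσ
    have := Finset.card_le_univ σ
    omega
  haveI : IsEmpty ↥((X.induced S).cells (i + 1)) := by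
    rw [hc]; exact Finset.instIsEmpty
  haveI : Subsingleton (Chains K (X.induced S) (i + 1)) :=
    ⟨fun a b => funext fun x => (IsEmpty.false x).elim⟩
  haveI : Subsingleton (RedHomology K (X.induced S) (i + 1)) :=
    (Submodule.Quotient.mk_surjective _).subsingleton
  exact Module.finrank_zero_of_subsingleton

/-- The key homological fact: the boundary of a simplex on a vertex set of
cardinality `k + 2` has nonvanishing reduced homology in dimension `k`. -/
lemma bd_homology_ne_zero (K : Type) [Field K] (A : Finset V) (k : ℕ)
    (hA : A.card = k + 2) (X : SComplex V) (hX : X.faces = A.powerset.erase A) :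
    redHomDim K X (k + 1) ≠ 0 := by
  -- facets of the boundary complex
  have hAmem : ∀ v ∈ A, A.erase v ∈ X.cells (k + 1) := by
    intro v hv
    simp only [SComplex.cells, Finset.mem_filter, hX, Finset.mem_erase, Finset.mem_powerset]
    have hcard : (A.erase v).card = k + 1 := by
      rw [Finset.card_erase_of_mem hv, hA]
      omega
    refine ⟨⟨fun h => ?_, Finset.erase_subset _ _⟩, hcard⟩
    rw [h] at hcard; omega
  -- the standard cycle
  set z : Chains K X (k + 1) :=
    fun σ => ∑ v ∈ A, if A.erase v = (σ : Finset V) then (-1 : K) ^ sg A v else 0 with hzdef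
  obtain ⟨a0, ha0⟩ : A.Nonempty := Finset.card_pos.1 (by omega)
  have hz_val : ∀ v (hv : v ∈ A), z ⟨A.erase v, hAmem v hv⟩ = (-1 : K) ^ sg A v := by
    intro v hv
    show (∑ w ∈ A, if A.erase w = A.erase v then (-1 : K) ^ sg A w else 0) = (-1 : K) ^ sg A v
    refine (Finset.sum_eq_single_of_mem v hv fun w hw hwv =>
      if_neg fun h => ?_).trans (if_pos rfl)
    have : v ∈ A.erase w := Finset.mem_erase.2 ⟨fun hvw => hwv hvw.symm, hv⟩
    rw [h] at this
    exact (Finset.notMem_erase v A) this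
  -- no faces of cardinality `k+2`
  haveI hem : IsEmpty ↥(X.cells (k + 2)) := by
    rw [show X.cells (k + 2) = ∅ from ?_]
    · exact Finset.instIsEmpty
    · rw [Finset.eq_empty_iff_forall_notMem]
      intro σ hσ
      simp only [SComplex.cells, Finset.mem_filter, hX, Finset.mem_erase,
        Finset.mem_powerset] at hσ
      exact hσ.1.1 (Finset.eq_of_subset_of_card_le hσ.1.2 (by omega))
  have hbd0 : ∀ x : Chains K X (k + 2), boundary K X (k + 1) x = 0 := by
    intro x
    funext τ
    simp [boundary, Finset.univ_eq_empty]
  -- z is a cycle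
  have hker : boundary K X k z = 0 := by
    funext τ
    obtain ⟨hτfaces, hτcard⟩ :
        (τ : Finset V) ∈ X.faces ∧ (τ : Finset V).card = k := by
      have := τ.2
      simp only [SComplex.cells, Finset.mem_filter] at this
      exact this
    obtain ⟨hτne, hτsub⟩ : (τ : Finset V) ≠ A ∧ (τ : Finset V) ⊆ A := by
      rw [hX, Finset.mem_erase, Finset.mem_powerset] at hτfaces
      exact hτfaces
    have hB : (A \ (τ : Finset V)).card = 2 := by
      rw [Finset.card_sdiff_of_subset hτsub, hA, hτcard]
      omega
    obtain ⟨a, b, hab, hpair⟩ := Finset.card_eq_two.1 hB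
    have haA : a ∈ A := by
      have : a ∈ A \ (τ : Finset V) := by rw [hpair]; exact Finset.mem_insert_self _ _
      exact (Finset.mem_sdiff.1 this).1
    have hbA : b ∈ A := by
      have : b ∈ A \ (τ : Finset V) := by
        rw [hpair]; exact Finset.mem_insert_of_mem (Finset.mem_singleton_self _)
      exact (Finset.mem_sdiff.1 this).1
    show (boundary K X k) z τ = 0
    have step1 : (boundary K X k) z τ =
        ∑ σ : ↥(X.cells (k + 1)),
          (∑ u ∈ (σ : Finset V),
            if (σ : Finset V).erase u = (τ : Finset V) then (-1 : K) ^ sg (σ : Finset V) u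
            else 0) * z σ := by
      simp only [boundary, LinearMap.pi_apply, LinearMap.coe_sum, Finset.sum_apply,
        LinearMap.smul_apply, LinearMap.proj_apply, smul_eq_mul]
      rfl
    rw [step1]
    have step2 : ∀ σ : ↥(X.cells (k + 1)),
        (∑ u ∈ (σ : Finset V),
            if (σ : Finset V).erase u = (τ : Finset V) then (-1 : K) ^ sg (σ : Finset V) u
            else 0) * z σ =
        ∑ v ∈ A, if A.erase v = (σ : Finset V) then
          (∑ u ∈ (σ : Finset V),
            if (σ : Finset V).erase u = (τ : Finset V) then (-1 : K) ^ sg (σ : Finset V) u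
            else 0) * (-1 : K) ^ sg A v else 0 := by
      intro σ
      show (∑ u ∈ (σ : Finset V),
            if (σ : Finset V).erase u = (τ : Finset V) then (-1 : K) ^ sg (σ : Finset V) u
            else 0) *
          (∑ v ∈ A, if A.erase v = (σ : Finset V) then (-1 : K) ^ sg A v else 0) = _
      rw [Finset.mul_sum]
      exact Finset.sum_congr rfl fun v _ => by rw [mul_ite, mul_zero]
    rw [Finset.sum_congr rfl fun σ _ => step2 σ]
    rw [Finset.sum_comm]
    have step3 : ∀ v ∈ A,
        (∑ σ : ↥(X.cells (k + 1)), if A.erase v = (σ : Finset V) then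
          (∑ u ∈ (σ : Finset V),
            if (σ : Finset V).erase u = (τ : Finset V) then (-1 : K) ^ sg (σ : Finset V) u
            else 0) * (-1 : K) ^ sg A v else 0) =
        (∑ u ∈ A.erase v,
            if (A.erase v).erase u = (τ : Finset V) then (-1 : K) ^ sg (A.erase v) u
            else 0) * (-1 : K) ^ sg A v := by
      intro v hv
      rw [Finset.sum_coe_sort (X.cells (k + 1))
        (fun x => if A.erase v = x then
          (∑ u ∈ x, if x.erase u = (τ : Finset V) then (-1 : K) ^ sg x u else 0) *
            (-1 : K) ^ sg A v else 0)]
      rw [Finset.sum_ite_eq, if_pos (hAmem v hv)]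
    rw [Finset.sum_congr rfl step3]
    -- only v ∈ {a, b} contribute
    have hcond : ∀ v ∈ A, ∀ u ∈ A.erase v,
        (A.erase v).erase u = (τ : Finset V) ↔ A \ (τ : Finset V) = {v, u} :=
      fun v hv u hu => erase_erase_eq_iff hv (Finset.mem_of_mem_erase hu) hτsub
    have hvanish : ∀ v ∈ A, v ∉ ({a, b} : Finset V) →
        (∑ u ∈ A.erase v,
            if (A.erase v).erase u = (τ : Finset V) then (-1 : K) ^ sg (A.erase v) u
            else 0) * (-1 : K) ^ sg A v = 0 := by
      intro v hv hvab
      rw [Finset.sum_eq_zero, zero_mul]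
      intro u hu
      rw [if_neg]
      intro h
      rw [hcond v hv u hu] at h
      apply hvab
      rw [← hpair, h]
      exact Finset.mem_insert_self _ _
    rw [← Finset.sum_subset (show ({a, b} : Finset V) ⊆ A by
        intro x hx
        rcases Finset.mem_insert.1 hx with rfl | hx
        · exact haA
        · rw [Finset.mem_singleton.1 hx]; exact hbA)
      (fun v hv hvab => hvanish v hv hvab)]
    rw [Finset.sum_pair hab]
    -- evaluate the two remaining terms
    have hterm : ∀ v u : V, v ∈ A → u ∈ A → u ≠ v → A \ (τ : Finset V) = {v, u} →
        (∑ w ∈ A.erase v,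
            if (A.erase v).erase w = (τ : Finset V) then (-1 : K) ^ sg (A.erase v) w
            else 0) = (-1 : K) ^ sg (A.erase v) u := by
      intro v u hv hu huv hvu
      have huev : u ∈ A.erase v := Finset.mem_erase.2 ⟨huv, hu⟩
      refine Finset.sum_eq_single_of_mem u huev (fun w hw hwu => if_neg fun h => ?_) |>.trans ?_
      · rw [hcond v hv w hw, hvu] at h
        have : w ∈ ({v, u} : Finset V) := by
          rw [h]; exact Finset.mem_insert_of_mem (Finset.mem_singleton_self _)
        rcases Finset.mem_insert.1 this with rfl | hwu'
        · exact (Finset.mem_erase.1 hw).1 rfl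
        · exact hwu (Finset.mem_singleton.1 hwu')
      · rw [if_pos ((hcond v hv u huev).2 hvu)]
    have hab' : b ≠ a := fun h => hab h.symm
    rw [hterm a b haA hbA hab' hpair, hterm b a hbA haA hab (by rwa [Finset.pair_comm] at hpair)]
    rw [← pow_add, ← pow_add]
    rw [show (0 : K) = (-1 : K) ^ (sg (A.erase a) b + sg A a) +
      (-1 : K) ^ (sg (A.erase b) a + sg A b) from (sign_cancel K A hbA haA hab').symm]
  -- conclude
  have hz_mem : z ∈ cyclesSub K X (k + 1) := by
    rw [cyclesSub]
    exact LinearMap.mem_ker.2 hker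
  have hmk : (Submodule.Quotient.mk ⟨z, hz_mem⟩ : RedHomology K X (k + 1)) ≠ 0 := by
    intro h
    rw [Submodule.Quotient.mk_eq_zero, Submodule.mem_comap] at h
    obtain ⟨x, hx⟩ := h
    have hz0 : z = 0 := by
      rw [show z = (SComplex.cyclesSub K X (k + 1)).subtype ⟨z, hz_mem⟩ from rfl, ← hx, hbd0 x]
    have := hz_val a0 ha0
    rw [hz0] at this
    exact pow_ne_zero _ (neg_ne_zero.2 one_ne_zero) this.symm
  haveI : Nontrivial (RedHomology K X (k + 1)) := nontrivial_of_ne _ _ hmk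
  exact Module.finrank_pos.ne'

end HellyAux

/-- **Proposition.** For every finite family of sets `F` and every field `K`,
`h(F) ≤ 1 + L_K(N(F))`. -/
theorem hellyNum_le_lerayNum_nerve {α ι : Type} [Fintype ι] [DecidableEq ι]
    (K : Type) [Field K] (F : ι → Set α) :
    hellyNum F ≤ 1 + SComplex.lerayNum K (nerve F) := by
  classical
  have hL : SComplex.IsLeray K (SComplex.lerayNum K (nerve F)) (nerve F) := by
    have hne : {d | SComplex.IsLeray K d (nerve F)}.Nonempty :=
      ⟨Fintype.card ι, HellyAux.isLeray_card K (nerve F)⟩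
    exact Nat.sInf_mem hne
  set d := SComplex.lerayNum K (nerve F) with hd
  apply Nat.sInf_le
  refine ⟨by omega, ?_⟩
  intro G
  induction G using Finset.strongInduction with
  | _ G ih =>
    intro hyp
    by_cases hcard : G.card ≤ 1 + d
    · exact hyp G Finset.Subset.rfl hcard
    · by_contra hne
      push_neg at hcard
      obtain ⟨j, hj⟩ := Nat.le.dest (show d + 2 ≤ G.card by omega)
      set k := d + j with hk
      have hGcard : G.card = k + 2 := by omega
      have hfaces : ((nerve F).induced G).faces = G.powerset.erase G := by
        ext σ
        rw [SComplex.induced, Finset.mem_filter, Finset.mem_erase, Finset.mem_powerset]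
        simp only [nerve, Finset.mem_filter, Finset.mem_univ, true_and]
        constructor
        · rintro ⟨hσne, hσsub⟩
          refine ⟨fun h => ?_, hσsub⟩
          rw [h] at hσne
          exact hne hσne
        · rintro ⟨hσne, hσsub⟩
          refine ⟨?_, hσsub⟩
          have hσss : σ ⊂ G := Finset.ssubset_iff_subset_ne.2 ⟨hσsub, hσne⟩
          exact ih σ hσss fun G' hG' hG'c => hyp G' (hG'.trans hσsub) hG'c
      have h0 := hL G k (by omega)
      exact HellyAux.bd_homology_ne_zero K G k hGcard ((nerve F).induced G) hfaces h0
end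

section
/- Let X and Y be simplicial complexes on the same vertex set V, with dim Y = n, and let Δ denote the full simplex on V. Let K = ∪_{σ ∈ Y} |Δ[σ]| × |D_Y(σ)| ⊆ |Y| × |sd(Y)| and L = ∪_{σ ∈ Y} |X[σ]| × |D_Y(σ)| ⊆ |X ∩ Y| × |sd(Y)|, where |·| denotes geometric realization. Then the projection onto the first coordinate π : K → |Y| is a homotopy equivalence, and its restriction π|_L : L → |X ∩ Y| is a homotopy equivalence. -/
open Finset

namespace SComplex

variable {V : Type} [DecidableEq V]

/-- The order complex of a collection `C` of finsets (ordered by inclusion):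
its vertices are the members of `C` and its faces are the chains in `C`. -/
def orderComplex (C : Finset (Finset V)) : SComplex (Finset V) where
  faces := C.powerset.filter (fun c => ∀ τ₁ ∈ c, ∀ τ₂ ∈ c, τ₁ ⊆ τ₂ ∨ τ₂ ⊆ τ₁)
  down_closed := fun c hc c' hcc' => by
    rw [Finset.mem_filter, Finset.mem_powerset] at hc ⊢
    exact ⟨hcc'.trans hc.1, fun τ₁ h1 τ₂ h2 => hc.2 τ₁ (hcc' h1) τ₂ (hcc' h2)⟩

/-- The barycentric subdivision `sd(X)`: the order complex of the poset of
non-empty faces of `X`. -/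
def sd (X : SComplex V) : SComplex (Finset V) :=
  orderComplex (X.faces.erase ∅)

/-- The dual cell `D_X(σ)`: the order complex of the interval
`[σ,·] = {τ ∈ X : σ ⊆ τ}`. -/
def dualCell (X : SComplex V) (σ : Finset V) : SComplex (Finset V) :=
  orderComplex (X.faces.filter (fun τ => σ ⊆ τ))

/-- The reduced dual cell `Ḋ_X(σ)`: the order complex of the interval
`(σ,·] = {τ ∈ X : σ ⊊ τ}`. -/
def dualCellBd (X : SComplex V) (σ : Finset V) : SComplex (Finset V) :=
  orderComplex (X.faces.filter (fun τ => σ ⊆ τ ∧ σ ≠ τ))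

open scoped Classical in
/-- The geometric realization of `X`, inside `V → ℝ`: the set of probability
vectors on `V` whose support is a face of `X`. -/
noncomputable def geomReal [Fintype V] (X : SComplex V) : Set (V → ℝ) :=
  {f | (∀ v, 0 ≤ f v) ∧ (∑ v, f v) = 1 ∧ (Finset.univ.filter (fun v => f v ≠ 0)) ∈ X.faces}

end SComplex

/-!
Write `bary y` for the barycentric map `|sd Δ| → Δ`, `(bary y)_v = ∑_{τ ∋ v} y_τ / #τ`, and
`Φ(x, y) = (x + bary y) / 2 = blend 1 (x, y)` on `K = resolution Y`. For `(x, y) ∈ K` the vector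
`x` is supported on the smallest face of the flag `y`, where `bary y` attains its maximum `s`;
hence `bary y = min (x + bary y) s` coordinatewise, and `s` is pinned down by `∑ bary y = 1`.
Since a flag is determined by its barycenter, `Φ` is a continuous bijection from the compact `K`
onto `|Y|`, hence a homeomorphism. The straight-line homotopy `blend t = (1 - t/2) x + (t/2) bary y`
joins `π` to `Φ`, so `Φ⁻¹` is a homotopy inverse of `π`. On `L = subResolution X Y` the same
homotopy and `Φ⁻¹` work, because the first coordinate of `Φ⁻¹ (blend t p)` is supported inside
`supp p.1`, and the points of `|X ∩ Y|` keep their support along the homotopy.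
-/

section

variable {E F : Type*} [TopologicalSpace E] [TopologicalSpace F] {K L : Set E} {Z W : Set F}

def ContinuousMap.Homotopy.restrictHomotopyEquiv {π : C(K, Z)} {Φ : K ≃ₜ Z}
    (H : π.Homotopy (Φ : C(K, Z))) (hLK : L ⊆ K) (hWZ : W ⊆ Z)
    (hπ : ∀ p : K, (p : E) ∈ L → (π p : F) ∈ W)
    (hΦ : ∀ z : Z, (z : F) ∈ W → (Φ.symm z : E) ∈ L)
    (hHL : ∀ t (p : K), (p : E) ∈ L → (Φ.symm (H (t, p)) : E) ∈ L)
    (hHW : ∀ t (z : Z), (z : F) ∈ W → (H (t, Φ.symm z) : F) ∈ W) :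
    ContinuousMap.HomotopyEquiv L W where
  toFun := ⟨fun p => ⟨π ⟨p, hLK p.2⟩, hπ _ p.2⟩, by fun_prop⟩
  invFun := ⟨fun z => ⟨Φ.symm ⟨z, hWZ z.2⟩, hΦ _ z.2⟩, by fun_prop⟩
  left_inv := ⟨{
    toFun := fun q => ⟨Φ.symm (H (q.1, ⟨q.2, hLK q.2.2⟩)), hHL _ _ q.2.2⟩
    continuous_toFun := by fun_prop
    map_zero_left := fun _ => by simp
    map_one_left := fun _ => by simp }⟩
  right_inv := ⟨{
    toFun := fun q => ⟨H (q.1, Φ.symm ⟨q.2, hWZ q.2.2⟩), hHW _ _ q.2.2⟩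
    continuous_toFun := by fun_prop
    map_zero_left := fun _ => by simp
    map_one_left := fun _ => by simp }⟩

end

lemma min_eq_min_of_sum_min_eq {ι : Type*} [Fintype ι] {c : ι → ℝ} {s s' : ℝ}
    (h : ∑ i, min (c i) s = ∑ i, min (c i) s') (i : ι) : min (c i) s = min (c i) s' := by
  wlog hss : s ≤ s' generalizing s s'
  · exact (this h.symm (le_of_not_ge hss)).symm
  exact (Finset.sum_eq_sum_iff_of_le fun j _ => min_le_min_left _ hss).1 h i (Finset.mem_univ i)

lemma exists_sum_min_eq {ι : Type*} [Fintype ι] {c : ι → ℝ} (hc : ∀ i, 0 ≤ c i) {a : ℝ}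
    (ha : 0 < a) (hac : a ≤ ∑ i, c i) : ∃ s, 0 < s ∧ ∑ i, min (c i) s = a := by
  have hcont : Continuous fun s : ℝ => ∑ i, min (c i) s := by fun_prop
  have h0 : ∑ i, min (c i) 0 = 0 := Finset.sum_eq_zero fun i _ => min_eq_right (hc i)
  have htop : ∑ i, min (c i) (∑ j, c j) = ∑ j, c j := Finset.sum_congr rfl fun i _ =>
    min_eq_left (Finset.single_le_sum (fun j _ => hc j) (Finset.mem_univ i))
  obtain ⟨s, hs, hsa⟩ := intermediate_value_Icc (ha.le.trans hac) hcont.continuousOn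
    (show a ∈ Set.Icc _ _ by rw [h0, htop]; exact ⟨ha.le, hac⟩)
  refine ⟨s, hs.1.lt_of_ne ?_, hsa⟩
  rintro rfl
  exact ha.ne' (hsa.symm.trans h0)

namespace SComplex

section Support

variable {ι : Type*} [Fintype ι]

open scoped Classical in
noncomputable def supp (f : ι → ℝ) : Finset ι := univ.filter (f · ≠ 0)

@[simp]
lemma mem_supp {f : ι → ℝ} {i : ι} : i ∈ supp f ↔ f i ≠ 0 := by
  simp [supp]

lemma supp_nonempty {f : ι → ℝ} (hf : f ∈ stdSimplex ℝ ι) : (supp f).Nonempty := by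
  by_contra h
  have hzero : ∀ i, f i = 0 := fun i => by
    by_contra hi
    exact h ⟨i, mem_supp.2 hi⟩
  simpa [hzero] using hf.2

end Support

section Flag

variable {V : Type}

/-- A point of the barycentric subdivision of the full simplex on `V`, up to normalization. -/
structure IsFlag (y : Finset V → ℝ) : Prop where
  nonneg : ∀ τ, 0 ≤ y τ
  nonempty : ∀ τ, y τ ≠ 0 → τ.Nonempty
  isChain : IsChain (· ⊆ ·) {τ | y τ ≠ 0}

lemma IsFlag.exists_greatest [Fintype V] {y : Finset V → ℝ} (hy : IsFlag y)
    (h : ∃ τ, y τ ≠ 0) : ∃ M, y M ≠ 0 ∧ ∀ τ, y τ ≠ 0 → τ ⊆ M := by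
  obtain ⟨M, hM⟩ := (Set.toFinite {τ | y τ ≠ 0}).exists_maximal h
  refine ⟨M, hM.1, fun τ hτ => ?_⟩
  rcases hy.isChain.total hM.1 hτ with hMτ | hτM
  exacts [hM.2 hτ hMτ, hτM]

lemma IsFlag.update_zero [DecidableEq V] {y : Finset V → ℝ} (hy : IsFlag y) (M : Finset V) :
    IsFlag (Function.update y M 0) where
  nonneg τ := by
    rcases eq_or_ne τ M with rfl | hτ
    · simp
    · simpa [hτ] using hy.nonneg τ
  nonempty τ hτ := hy.nonempty τ fun h => hτ (by simp [Function.update_apply, h])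
  isChain := hy.isChain.mono fun τ (hτ : Function.update y M 0 τ ≠ 0) => by
    rw [Function.update_apply] at hτ
    split_ifs at hτ
    exacts [absurd rfl hτ, hτ]

def IsSuperlevelSet (u : V → ℝ) (τ : Finset V) : Prop :=
  ∀ ⦃v w⦄, w ∈ τ → u w ≤ u v → v ∈ τ

lemma IsSuperlevelSet.total {u : V → ℝ} {τ τ' : Finset V} (h : IsSuperlevelSet u τ)
    (h' : IsSuperlevelSet u τ') : τ ⊆ τ' ∨ τ' ⊆ τ := by
  by_contra! hne
  obtain ⟨⟨a, haτ, haτ'⟩, ⟨b, hbτ', hbτ⟩⟩ :=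
    And.intro (Finset.not_subset.1 hne.1) (Finset.not_subset.1 hne.2)
  rcases le_total (u a) (u b) with hab | hba
  exacts [hbτ (h haτ hab), haτ' (h' hbτ' hba)]

lemma isSuperlevelSet_supp [Fintype V] {u : V → ℝ} (hu : ∀ v, 0 ≤ u v) :
    IsSuperlevelSet u (supp u) := fun _ w hw hwv =>
  mem_supp.2 (((hu w).lt_of_ne' (mem_supp.1 hw)).trans_le hwv).ne'

lemma IsSuperlevelSet.of_sub [Fintype V] [DecidableEq V] {u : V → ℝ} (hu : ∀ v, 0 ≤ u v)
    {m : ℝ} {τ : Finset V} (hτ : τ ⊆ supp u)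
    (h : IsSuperlevelSet (fun v => u v - if v ∈ supp u then m else 0) τ) :
    IsSuperlevelSet u τ := fun v w hw hwv => by
  have hvu : v ∈ supp u := isSuperlevelSet_supp hu (hτ hw) hwv
  exact h hw (by simp [hτ hw, hvu, hwv])

end Flag

variable {V : Type} [DecidableEq V] [Fintype V]

noncomputable def bary (y : Finset V → ℝ) (v : V) : ℝ :=
  ∑ τ, if v ∈ τ then y τ / #τ else 0

noncomputable def baryMax (y : Finset V → ℝ) : ℝ :=
  ∑ τ, y τ / #τ

section Bary

variable {y : Finset V → ℝ}

@[simp]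
lemma bary_zero : bary (0 : Finset V → ℝ) = 0 := by
  funext v
  simp [bary]

lemma bary_nonneg (hy : ∀ τ, 0 ≤ y τ) (v : V) : 0 ≤ bary y v :=
  Finset.sum_nonneg fun τ _ => by split_ifs <;> positivity [hy τ]

lemma div_card_le_bary (hy : ∀ τ, 0 ≤ y τ) {τ : Finset V} {v : V} (hv : v ∈ τ) :
    y τ / #τ ≤ bary y v := by
  have h := Finset.single_le_sum (f := fun ρ => if v ∈ ρ then y ρ / #ρ else 0)
    (fun ρ _ => by split_ifs <;> positivity [hy ρ]) (Finset.mem_univ τ)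
  simpa [bary, hv] using h

lemma bary_le_baryMax (hy : ∀ τ, 0 ≤ y τ) (v : V) : bary y v ≤ baryMax y :=
  Finset.sum_le_sum fun τ _ => by split_ifs <;> first | exact le_rfl | positivity [hy τ]

lemma bary_eq_baryMax {v : V} (hv : ∀ τ, y τ ≠ 0 → v ∈ τ) : bary y v = baryMax y :=
  Finset.sum_congr rfl fun τ _ => by
    by_cases h : y τ = 0
    · simp [h]
    · simp [hv τ h]

lemma sum_bary (hy : ∀ τ, y τ ≠ 0 → τ.Nonempty) : ∑ v, bary y v = ∑ τ, y τ := by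
  unfold bary
  rw [Finset.sum_comm]
  refine Finset.sum_congr rfl fun τ _ => ?_
  by_cases hτ : y τ = 0
  · simp [hτ]
  · have hcard : (#τ : ℝ) ≠ 0 := by exact_mod_cast (hy τ hτ).card_pos.ne'
    rw [Finset.sum_ite_mem, Finset.univ_inter, Finset.sum_const, nsmul_eq_mul]
    field_simp

lemma bary_update (M : Finset V) (c : ℝ) (v : V) :
    bary (Function.update y M c) v = bary y v + if v ∈ M then (c - y M) / #M else 0 := by
  unfold bary
  rw [← Finset.add_sum_erase _ _ (Finset.mem_univ M),
    ← Finset.add_sum_erase _ _ (Finset.mem_univ M)]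
  rw [Finset.sum_congr rfl fun τ hτ => by rw [Function.update_of_ne (Finset.ne_of_mem_erase hτ)]]
  simp only [Function.update_self]
  split_ifs <;> ring

lemma continuous_bary : Continuous (bary (V := V)) :=
  continuous_pi fun v => continuous_finsetSum _ fun τ _ => by
    split_ifs
    · exact (continuous_apply τ).div_const _
    · exact continuous_const

lemma bary_eq_zero_of_forall_notMem {v : V} (h : ∀ τ, y τ ≠ 0 → v ∉ τ) : bary y v = 0 :=
  Finset.sum_eq_zero fun τ _ => by
    by_cases hτ : y τ = 0
    · simp [hτ]
    · simp [h τ hτ]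

lemma subset_supp_bary (hy : ∀ τ, 0 ≤ y τ) {τ : Finset V} (hτ : y τ ≠ 0) :
    τ ⊆ supp (bary y) := fun v hv => by
  have hpos : 0 < y τ / #τ :=
    div_pos ((hy τ).lt_of_ne' hτ) (by exact_mod_cast Finset.card_pos.2 ⟨v, hv⟩)
  exact mem_supp.2 (hpos.trans_le (div_card_le_bary hy hv)).ne'

end Bary

section FlagBary

variable {y y' : Finset V → ℝ}

namespace IsFlag

variable (hy : IsFlag y) {M : Finset V} (hM : y M ≠ 0) (hmax : ∀ τ, y τ ≠ 0 → τ ⊆ M)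
include hy hM hmax

lemma supp_bary : supp (bary y) = M := by
  refine Finset.Subset.antisymm (fun v hv => ?_) (subset_supp_bary hy.nonneg hM)
  by_contra hvM
  exact mem_supp.1 hv (bary_eq_zero_of_forall_notMem fun τ hτ hvτ => hvM (hmax τ hτ hvτ))

lemma isLeast_bary : IsLeast (bary y '' M) (y M / #M) := by
  refine ⟨?_, Set.forall_mem_image.2 fun v hv => div_card_le_bary hy.nonneg hv⟩
  have hfree : ∃ v₀ ∈ M, ∀ τ, Function.update y M 0 τ ≠ 0 → v₀ ∉ τ := by
    by_cases h : ∃ τ, Function.update y M 0 τ ≠ 0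
    · obtain ⟨m, hm, hmmax⟩ := (hy.update_zero M).exists_greatest h
      have hmM : m ≠ M := fun h => hm (by simp [h])
      have hm' : y m ≠ 0 := by simpa [hmM] using hm
      obtain ⟨v₀, hv₀M, hv₀m⟩ :=
        Finset.exists_of_ssubset ((hmax m hm').ssubset_of_ne hmM)
      exact ⟨v₀, hv₀M, fun τ hτ hv₀τ => hv₀m (hmmax τ hτ hv₀τ)⟩
    · push Not at h
      obtain ⟨v₀, hv₀⟩ := hy.nonempty M hM
      exact ⟨v₀, hv₀, fun τ hτ => absurd (h τ) hτ⟩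
  obtain ⟨v₀, hv₀M, hv₀⟩ := hfree
  refine ⟨v₀, hv₀M, ?_⟩
  have h0 := bary_update (y := y) M 0 v₀
  rw [bary_eq_zero_of_forall_notMem hv₀, if_pos hv₀M] at h0
  linarith [show (0 - y M) / #M = -(y M / #M) by ring]

end IsFlag

lemma IsFlag.eq_zero_of_bary_eq_zero (hy : IsFlag y) (h : bary y = 0) : y = 0 := by
  by_contra hne
  obtain ⟨M, hM, hmax⟩ := hy.exists_greatest (by simpa [funext_iff] using hne)
  obtain ⟨v, hv⟩ := hy.nonempty M hM
  have := hy.supp_bary hM hmax ▸ hv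
  simp [h] at this

lemma IsFlag.top_eq_of_bary_eq (hy : IsFlag y) (hy' : IsFlag y') (h : bary y = bary y')
    {M : Finset V} (hM : y M ≠ 0) (hmax : ∀ τ, y τ ≠ 0 → τ ⊆ M) :
    y' M = y M ∧ ∀ τ, y' τ ≠ 0 → τ ⊆ M := by
  obtain ⟨M', hM', hmax'⟩ := hy'.exists_greatest (by
    by_contra! h0
    obtain rfl : y' = 0 := funext h0
    exact hM (congrFun (hy.eq_zero_of_bary_eq_zero (by simp [h])) M))
  obtain rfl : M = M' := by
    rw [← hy.supp_bary hM hmax, ← hy'.supp_bary hM' hmax', h]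
  refine ⟨?_, hmax'⟩
  have := (hy.isLeast_bary hM hmax).unique (h ▸ hy'.isLeast_bary hM' hmax')
  have hcard : (#M : ℝ) ≠ 0 := by exact_mod_cast (hy.nonempty M hM).card_pos.ne'
  field_simp at this
  exact this.symm

/-- A flag is recovered from its barycenter by repeatedly stripping off its top face. -/
theorem IsFlag.eq_of_bary_eq (hy : IsFlag y) (hy' : IsFlag y') (h : bary y = bary y') :
    y = y' := by
  classical
  induction hn : #(univ.filter fun τ => y τ ≠ 0) generalizing y y' with
  | zero =>
    simp only [Finset.card_eq_zero, Finset.filter_eq_empty_iff, Finset.mem_univ, not_not,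
      true_implies] at hn
    obtain rfl : y = 0 := funext fun τ => @hn τ
    exact (hy'.eq_zero_of_bary_eq_zero (by simp [← h])).symm
  | succ n ih =>
    obtain ⟨M, hM, hmax⟩ := hy.exists_greatest (by
      by_contra! h0
      simp [h0] at hn)
    have hyM := (hy.top_eq_of_bary_eq hy' h hM hmax).1
    have hsupp : (univ.filter fun τ => Function.update y M 0 τ ≠ 0) =
        (univ.filter fun τ => y τ ≠ 0).erase M := by
      ext τ
      rcases eq_or_ne τ M with rfl | hτ <;> simp [*]
    have hupd := ih (hy.update_zero M) (hy'.update_zero M)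
      (funext fun v => by rw [bary_update, bary_update, h, hyM])
      (by rw [hsupp, Finset.card_erase_of_mem (by simpa using hM), hn, Nat.add_sub_cancel])
    funext τ
    rcases eq_or_ne τ M with rfl | hτ
    · exact hyM.symm
    · simpa [hτ] using congrFun hupd τ

/-- Peel off the least positive value of `u`, on the whole support, and recurse. -/
theorem exists_isFlag_bary_eq {u : V → ℝ} (hu : ∀ v, 0 ≤ u v) :
    ∃ y, IsFlag y ∧ bary y = u ∧ ∀ τ, y τ ≠ 0 → IsSuperlevelSet u τ := by
  induction hn : #(supp u) using Nat.strong_induction_on generalizing u with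
  | _ n ih =>
  rcases (supp u).eq_empty_or_nonempty with hM | hM
  · refine ⟨0, ⟨fun _ => le_rfl, by simp, by simp⟩, funext fun v => ?_, by simp⟩
    simpa [eq_comm] using Finset.eq_empty_iff_forall_notMem.1 hM v
  set M := supp u
  obtain ⟨v₀, hv₀, hmin⟩ := M.exists_min_image u hM
  set m := u v₀
  set u' : V → ℝ := fun v => u v - if v ∈ M then m else 0
  have hu' : ∀ v, 0 ≤ u' v := fun v => by
    by_cases hv : v ∈ M <;> simp [u', hv, hmin, hu]
  have hsupp' : supp u' ⊆ M.erase v₀ := fun v hv => by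
    by_cases hvM : v ∈ M
    · exact Finset.mem_erase.2 ⟨fun h => mem_supp.1 hv (by simp [u', h, hv₀, m]), hvM⟩
    · refine absurd ?_ (mem_supp.1 hv)
      simp only [u', if_neg hvM, sub_zero]
      simpa [M] using hvM
  obtain ⟨y', hy', hbary', hlevel'⟩ := ih _ (hn ▸ (Finset.card_le_card hsupp').trans_lt
    (Finset.card_erase_lt_of_mem hv₀)) hu' rfl
  have hy'M : y' M = 0 := by
    by_contra h
    have := ((subset_supp_bary hy'.nonneg h).trans (hbary' ▸ hsupp')) hv₀
    simp at this
  have hlevel : ∀ τ, Function.update y' M (m * #M) τ ≠ 0 → IsSuperlevelSet u τ := by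
    intro τ hτ
    rcases eq_or_ne τ M with rfl | hτM
    · exact isSuperlevelSet_supp hu
    rw [Function.update_of_ne hτM] at hτ
    have hτu' := subset_supp_bary hy'.nonneg hτ
    rw [hbary'] at hτu'
    exact (hlevel' τ hτ).of_sub hu ((hτu'.trans hsupp').trans (Finset.erase_subset v₀ M))
  refine ⟨_, ⟨fun τ => ?_, fun τ hτ => ?_, fun τ hτ τ' hτ' _ => ?_⟩, funext fun v => ?_, hlevel⟩
  · rcases eq_or_ne τ M with rfl | hτM
    · simpa using mul_nonneg (hu v₀) (Nat.cast_nonneg _)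
    · simpa [hτM] using hy'.nonneg τ
  · rcases eq_or_ne τ M with rfl | hτM
    · exact hM
    · exact hy'.nonempty τ (by simpa [hτM] using hτ)
  · exact (hlevel τ hτ).total (hlevel τ' hτ')
  · have hcard : (#M : ℝ) ≠ 0 := by exact_mod_cast hM.card_pos.ne'
    rw [bary_update, hbary', hy'M]
    by_cases hv : v ∈ M <;> simp [u', hv, hcard]

end FlagBary

lemma mem_geomReal_iff {X : SComplex V} {f : V → ℝ} :
    f ∈ geomReal X ↔ f ∈ stdSimplex ℝ V ∧ supp f ∈ X.faces := by
  simp only [geomReal, stdSimplex, supp, Set.mem_ofPred_eq, and_assoc]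

lemma mem_geomReal_of_supp_subset {X : SComplex V} {f : V → ℝ} {σ : Finset V}
    (hf : f ∈ stdSimplex ℝ V) (hσ : σ ∈ X.faces) (hfσ : supp f ⊆ σ) : f ∈ geomReal X :=
  mem_geomReal_iff.2 ⟨hf, X.down_closed hσ hfσ⟩

lemma mem_geomReal_inter {X Y : SComplex V} {f : V → ℝ} :
    f ∈ geomReal (X.inter Y) ↔ f ∈ geomReal Y ∧ supp f ∈ X.faces := by
  simp only [mem_geomReal_iff, inter, Finset.mem_inter]
  tauto

lemma isCompact_geomReal (X : SComplex V) : IsCompact (geomReal X) := by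
  have hunion : geomReal X = stdSimplex ℝ V ∩ ⋃ σ ∈ X.faces, {f | ∀ v ∉ σ, f v = 0} := by
    ext f
    simp only [mem_geomReal_iff, Set.mem_inter_iff, Set.mem_iUnion, Set.mem_ofPred_eq,
      exists_prop]
    refine and_congr_right fun _ => ⟨fun h => ⟨_, h, fun v hv => ?_⟩, fun ⟨σ, hσ, hf⟩ =>
      X.down_closed hσ fun v hv => ?_⟩
    · by_contra hfv
      exact hv (mem_supp.2 hfv)
    · by_contra hvσ
      exact mem_supp.1 hv (hf v hvσ)
  rw [hunion]
  refine (isCompact_stdSimplex ℝ V).inter_right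
    (X.faces.finite_toSet.isClosed_biUnion fun σ _ => ?_)
  simp only [Set.ofPred_forall]
  exact isClosed_iInter fun v => isClosed_iInter fun _ =>
    isClosed_eq (continuous_apply v) continuous_const

noncomputable def resolution (Y : SComplex V) : Set ((V → ℝ) × (Finset V → ℝ)) :=
  ⋃ σ ∈ Y.faces, geomReal (simplexOn σ) ×ˢ geomReal (Y.dualCell σ)

noncomputable def subResolution (X Y : SComplex V) : Set ((V → ℝ) × (Finset V → ℝ)) :=
  ⋃ σ ∈ Y.faces, geomReal (X.induced σ) ×ˢ geomReal (Y.dualCell σ)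

lemma induced_simplexOn_univ (σ : Finset V) : (simplexOn univ).induced σ = simplexOn σ := by
  simp only [induced, simplexOn, SComplex.mk.injEq]
  ext τ
  simp

lemma resolution_eq_subResolution (Y : SComplex V) :
    resolution Y = subResolution (simplexOn univ) Y := by
  simp only [resolution, subResolution, induced_simplexOn_univ]

structure IsResolutionPoint (Y : SComplex V) (p : (V → ℝ) × (Finset V → ℝ)) : Prop where
  fst_mem : p.1 ∈ stdSimplex ℝ V
  snd_mem : p.2 ∈ stdSimplex ℝ (Finset V)
  isChain : IsChain (· ⊆ ·) {τ | p.2 τ ≠ 0}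
  mem_faces : ∀ τ, p.2 τ ≠ 0 → τ ∈ Y.faces
  supp_subset : ∀ τ, p.2 τ ≠ 0 → supp p.1 ⊆ τ

lemma mem_geomReal_dualCell {Y : SComplex V} {σ : Finset V} {y : Finset V → ℝ} :
    y ∈ geomReal (Y.dualCell σ) ↔ y ∈ stdSimplex ℝ (Finset V) ∧
      IsChain (· ⊆ ·) {τ | y τ ≠ 0} ∧ ∀ τ, y τ ≠ 0 → τ ∈ Y.faces ∧ σ ⊆ τ := by
  simp only [mem_geomReal_iff, dualCell, orderComplex, Finset.mem_filter, Finset.mem_powerset]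
  refine and_congr_right fun _ => ⟨fun ⟨hsub, hchain⟩ => ⟨fun τ hτ τ' hτ' _ => ?_, fun τ hτ => ?_⟩,
    fun ⟨hchain, hsub⟩ => ⟨fun τ hτ => ?_, fun τ hτ τ' hτ' => ?_⟩⟩
  · exact hchain τ (mem_supp.2 hτ) τ' (mem_supp.2 hτ')
  · simpa using hsub (mem_supp.2 hτ)
  · simpa using hsub τ (mem_supp.1 hτ)
  · exact hchain.total (mem_supp.1 hτ) (mem_supp.1 hτ')

lemma mem_subResolution_iff {X Y : SComplex V} {p : (V → ℝ) × (Finset V → ℝ)} :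
    p ∈ subResolution X Y ↔ IsResolutionPoint Y p ∧ supp p.1 ∈ X.faces := by
  simp only [subResolution, Set.mem_iUnion, Set.mem_prod, mem_geomReal_dualCell, exists_prop]
  simp only [mem_geomReal_iff, induced, Finset.mem_filter]
  constructor
  · rintro ⟨σ, -, ⟨hx, hxX, hxσ⟩, hy, hchain, hτ⟩
    exact ⟨⟨hx, hy, hchain, fun τ h => (hτ τ h).1, fun τ h => hxσ.trans (hτ τ h).2⟩, hxX⟩
  · rintro ⟨hp, hxX⟩
    obtain ⟨τ, hτ⟩ := supp_nonempty hp.snd_mem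
    have hτ := mem_supp.1 hτ
    exact ⟨supp p.1, Y.down_closed (hp.mem_faces τ hτ) (hp.supp_subset τ hτ),
      ⟨hp.fst_mem, hxX, subset_rfl⟩, hp.snd_mem, hp.isChain,
      fun τ h => ⟨hp.mem_faces τ h, hp.supp_subset τ h⟩⟩

lemma mem_resolution_iff {Y : SComplex V} {p : (V → ℝ) × (Finset V → ℝ)} :
    p ∈ resolution Y ↔ IsResolutionPoint Y p := by
  simp [resolution_eq_subResolution, mem_subResolution_iff, simplexOn]

lemma isCompact_resolution (Y : SComplex V) : IsCompact (resolution Y) :=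
  Y.faces.finite_toSet.isCompact_biUnion fun _ _ =>
    (isCompact_geomReal _).prod (isCompact_geomReal _)

noncomputable def blend (t : ℝ) (p : (V → ℝ) × (Finset V → ℝ)) : V → ℝ :=
  (1 - t / 2) • p.1 + (t / 2) • bary p.2

lemma blend_apply (t : ℝ) (p : (V → ℝ) × (Finset V → ℝ)) (v : V) :
    blend t p v = (1 - t / 2) * p.1 v + t / 2 * bary p.2 v := rfl

lemma blend_zero (p : (V → ℝ) × (Finset V → ℝ)) : blend 0 p = p.1 := by
  simp [blend]

lemma supp_blend_subset (t : ℝ) (p : (V → ℝ) × (Finset V → ℝ)) :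
    supp (blend t p) ⊆ supp p.1 ∪ supp (bary p.2) := fun v hv => by
  by_contra h
  simp only [Finset.mem_union, mem_supp, not_or, not_not] at h
  exact mem_supp.1 hv (by simp [blend_apply, h.1, h.2])

lemma continuous_blend :
    Continuous fun q : ℝ × ((V → ℝ) × (Finset V → ℝ)) => blend q.1 q.2 := by
  unfold blend
  have := continuous_bary (V := V)
  fun_prop

namespace IsResolutionPoint

variable {Y : SComplex V} {p q : (V → ℝ) × (Finset V → ℝ)}

lemma isFlag (hp : IsResolutionPoint Y p) : IsFlag p.2 where
  nonneg := hp.snd_mem.1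
  nonempty τ hτ := (supp_nonempty hp.fst_mem).mono (hp.supp_subset τ hτ)
  isChain := hp.isChain

lemma exists_greatest (hp : IsResolutionPoint Y p) :
    ∃ M, p.2 M ≠ 0 ∧ ∀ τ, p.2 τ ≠ 0 → τ ⊆ M :=
  let ⟨τ, hτ⟩ := supp_nonempty hp.snd_mem
  hp.isFlag.exists_greatest ⟨τ, mem_supp.1 hτ⟩

lemma sum_bary (hp : IsResolutionPoint Y p) : ∑ v, bary p.2 v = 1 := by
  rw [SComplex.sum_bary hp.isFlag.nonempty, hp.snd_mem.2]

/-- `p.1` lives on the smallest face of the flag `p.2`, where `bary p.2` attains its maximum. -/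
lemma bary_eq_min (hp : IsResolutionPoint Y p) (v : V) :
    bary p.2 v = min (p.1 v + bary p.2 v) (baryMax p.2) := by
  by_cases hv : p.1 v = 0
  · rw [hv, zero_add, min_eq_left (bary_le_baryMax hp.snd_mem.1 v)]
  · rw [bary_eq_baryMax fun τ hτ => hp.supp_subset τ hτ (mem_supp.2 hv),
      min_eq_right (le_add_of_nonneg_left (hp.fst_mem.1 v))]

lemma sum_min_eq_one (hp : IsResolutionPoint Y p) :
    ∑ v, min (p.1 v + bary p.2 v) (baryMax p.2) = 1 := by
  simp_rw [← hp.bary_eq_min, hp.sum_bary]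

lemma exists_face (hp : IsResolutionPoint Y p) :
    ∃ σ ∈ Y.faces, supp p.1 ⊆ σ ∧ supp (bary p.2) ⊆ σ := by
  obtain ⟨M, hM, hmax⟩ := hp.exists_greatest
  exact ⟨M, hp.mem_faces M hM, hp.supp_subset M hM, (hp.isFlag.supp_bary hM hmax).le⟩

lemma blend_mem_stdSimplex (hp : IsResolutionPoint Y p) {t : ℝ} (ht0 : 0 ≤ t) (ht2 : t ≤ 2) :
    blend t p ∈ stdSimplex ℝ V :=
  convex_stdSimplex ℝ V hp.fst_mem ⟨fun v => bary_nonneg hp.snd_mem.1 v, hp.sum_bary⟩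
    (by linarith) (by linarith) (by ring)

lemma blend_mem (hp : IsResolutionPoint Y p) {t : ℝ} (ht0 : 0 ≤ t) (ht2 : t ≤ 2) :
    blend t p ∈ geomReal Y := by
  obtain ⟨σ, hσ, h1, h2⟩ := hp.exists_face
  exact mem_geomReal_of_supp_subset (hp.blend_mem_stdSimplex ht0 ht2) hσ
    ((supp_blend_subset t p).trans (Finset.union_subset h1 h2))

lemma fst_mem_geomReal (hp : IsResolutionPoint Y p) : p.1 ∈ geomReal Y :=
  blend_zero p ▸ hp.blend_mem le_rfl zero_le_two

lemma supp_blend_one (hp : IsResolutionPoint Y p) :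
    supp (blend 1 p) = supp p.1 ∪ supp (bary p.2) := by
  refine (supp_blend_subset 1 p).antisymm fun v hv => mem_supp.2 ?_
  have hx := hp.fst_mem.1 v
  have hb := bary_nonneg hp.snd_mem.1 v
  rw [Finset.mem_union, mem_supp, mem_supp] at hv
  rw [blend_apply]
  rcases hv with hv | hv
  · nlinarith [hx.lt_of_ne' hv]
  · nlinarith [hb.lt_of_ne' hv]

lemma eq_of_blend_one_eq (hp : IsResolutionPoint Y p) (hq : IsResolutionPoint Y q)
    (h : blend 1 p = blend 1 q) : p = q := by
  have hc : ∀ v, p.1 v + bary p.2 v = q.1 v + bary q.2 v := fun v => by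
    have := congrFun h v
    simp only [blend_apply] at this
    linarith
  have hbary : bary p.2 = bary q.2 := funext fun v => by
    rw [hp.bary_eq_min, hq.bary_eq_min, ← hc]
    refine min_eq_min_of_sum_min_eq (c := fun w => p.1 w + bary p.2 w) ?_ v
    rw [hp.sum_min_eq_one, Finset.sum_congr rfl fun w _ => by rw [hc w], hq.sum_min_eq_one]
  have hsnd : p.2 = q.2 := hp.isFlag.eq_of_bary_eq hq.isFlag hbary
  exact Prod.ext (funext fun v => by linarith [hc v, congrFun hbary v]) hsnd

/-- A point of `supp q.1 \ supp p.1` would force the level `baryMax q.2` above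
`t * baryMax p.2`, and then the truncations of `q.1 + bary q.2` at that level could not sum
to `1`. -/
lemma supp_fst_subset_of_blend_eq (hp : IsResolutionPoint Y p) (hq : IsResolutionPoint Y q)
    {t : ℝ} (ht0 : 0 ≤ t) (ht1 : t ≤ 1) (h : blend 1 q = blend t p) :
    supp q.1 ⊆ supp p.1 := by
  set c : V → ℝ := fun v => q.1 v + bary q.2 v
  have hc : ∀ v, c v = (2 - t) * p.1 v + t * bary p.2 v := fun v => by
    have := congrFun h v
    simp only [blend_apply] at this
    simp only [c]
    linarith
  have hc_of_zero : ∀ v, p.1 v = 0 → c v = t * bary p.2 v := fun v hv => by simp [hc, hv]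
  intro v hv
  by_contra hpv
  have hqv := mem_supp.1 hv
  have hpv : p.1 v = 0 := by simpa using hpv
  have hlt : baryMax q.2 < c v := by
    have := bary_eq_baryMax (y := q.2) fun τ hτ => hq.supp_subset τ hτ hv
    simp only [c, this]
    linarith [(hq.fst_mem.1 v).lt_of_ne' hqv]
  have hle : c v ≤ t * baryMax p.2 :=
    hc_of_zero v hpv ▸ mul_le_mul_of_nonneg_left (bary_le_baryMax hp.snd_mem.1 v) ht0
  have hsum_le : ∑ w, min (c w) (t * baryMax p.2) ≤ t := by
    calc ∑ w, min (c w) (t * baryMax p.2) ≤ ∑ w, t * bary p.2 w := by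
          refine Finset.sum_le_sum fun w _ => ?_
          by_cases hw : p.1 w = 0
          · exact (min_le_left _ _).trans (hc_of_zero w hw).le
          · rw [bary_eq_baryMax fun τ hτ => hp.supp_subset τ hτ (mem_supp.2 hw)]
            exact min_le_right _ _
      _ = t := by rw [← Finset.mul_sum, hp.sum_bary, mul_one]
  have hsum_lt : 1 < ∑ w, min (c w) (t * baryMax p.2) := by
    rw [← hq.sum_min_eq_one]
    refine Finset.sum_lt_sum (fun w _ => min_le_min_left _ (hlt.trans_le hle).le)
      ⟨v, Finset.mem_univ v, ?_⟩
    rw [min_eq_right hlt.le, min_eq_left hle]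
    exact hlt
  linarith

end IsResolutionPoint

theorem exists_isResolutionPoint_blend_one_eq {Y : SComplex V} {z : V → ℝ}
    (hz : z ∈ geomReal Y) : ∃ p, IsResolutionPoint Y p ∧ blend 1 p = z := by
  obtain ⟨⟨hz0, hz1⟩, hzY⟩ := mem_geomReal_iff.1 hz
  set c : V → ℝ := fun v => 2 * z v
  have hc0 : ∀ v, 0 ≤ c v := fun v => by simp [c, hz0 v]
  obtain ⟨s, hs, hsum⟩ := exists_sum_min_eq hc0 one_pos
    (by simp [c, ← Finset.mul_sum, hz1])
  set u : V → ℝ := fun v => min (c v) s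
  obtain ⟨y, hy, hbary, hlevel⟩ := exists_isFlag_bary_eq (u := u) fun v => le_min (hc0 v) hs.le
  have hsupp_u : supp u = supp z := Finset.ext fun v => by
    simp only [mem_supp, u, c, ne_eq]
    constructor
    · exact fun h hz => h (by simp [hz, hs.le])
    · exact fun h => (lt_min (by positivity [(hz0 v).lt_of_ne' h]) hs).ne'
  refine ⟨(fun v => c v - u v, y), ⟨⟨fun v => sub_nonneg.2 (min_le_left _ _), ?_⟩,
    ⟨hy.nonneg, ?_⟩, hy.isChain, fun τ hτ => ?_, fun τ hτ v hv => ?_⟩, ?_⟩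
  · simp [Finset.sum_sub_distrib, c, ← Finset.mul_sum, hz1, u, hsum]
    norm_num
  · rw [← SComplex.sum_bary hy.nonempty, hbary, hsum]
  · exact Y.down_closed hzY (hsupp_u ▸ hbary ▸ subset_supp_bary hy.nonneg hτ)
  · have huv : u v = s := by
      by_contra h
      exact mem_supp.1 hv (by simp [u, min_eq_left_iff.1 ((min_choice (c v) s).resolve_right h)])
    obtain ⟨w, hw⟩ := hy.nonempty τ hτ
    exact hlevel τ hτ hw (huv ▸ min_le_right _ _)
  · funext v
    simp only [blend_apply, hbary, u, c]
    ring

noncomputable def blendOneHomeomorph (Y : SComplex V) : resolution Y ≃ₜ geomReal Y :=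
  haveI := isCompact_iff_compactSpace.1 (isCompact_resolution Y)
  Continuous.homeoOfEquivCompactToT2 (f := Equiv.ofBijective
      (fun p => ⟨blend 1 p.1, (mem_resolution_iff.1 p.2).blend_mem zero_le_one one_le_two⟩)
      ⟨fun p q h => Subtype.ext ((mem_resolution_iff.1 p.2).eq_of_blend_one_eq
          (mem_resolution_iff.1 q.2) (congrArg Subtype.val h)),
        fun z => let ⟨p, hp, hpz⟩ := exists_isResolutionPoint_blend_one_eq z.2
          ⟨⟨p, mem_resolution_iff.2 hp⟩, Subtype.ext hpz⟩⟩)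
    ((continuous_blend.comp (continuous_const.prodMk continuous_subtype_val)).subtype_mk _)

noncomputable def resolutionFst (Y : SComplex V) : C(resolution Y, geomReal Y) :=
  ⟨fun p => ⟨p.1.1, (mem_resolution_iff.1 p.2).fst_mem_geomReal⟩,
    (continuous_fst.comp continuous_subtype_val).subtype_mk _⟩

noncomputable def blendHomotopy (Y : SComplex V) :
    (resolutionFst Y).Homotopy (blendOneHomeomorph Y : C(resolution Y, geomReal Y)) where
  toFun q := ⟨blend q.1 q.2.1,
    (mem_resolution_iff.1 q.2.2).blend_mem q.1.2.1 (q.1.2.2.trans one_le_two)⟩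
  continuous_toFun := (continuous_blend.comp
    (continuous_subtype_val.prodMap continuous_subtype_val)).subtype_mk _
  map_zero_left _ := Subtype.ext (blend_zero _)
  map_one_left _ := rfl

section SubResolution

variable {X Y : SComplex V}

lemma subResolution_subset_resolution : subResolution X Y ⊆ resolution Y := fun _ hp =>
  mem_resolution_iff.2 (mem_subResolution_iff.1 hp).1

lemma geomReal_inter_subset : geomReal (X.inter Y) ⊆ geomReal Y := fun _ hz =>
  (mem_geomReal_inter.1 hz).1

lemma fst_mem_geomReal_inter {p : (V → ℝ) × (Finset V → ℝ)} (hp : p ∈ subResolution X Y) :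
    p.1 ∈ geomReal (X.inter Y) :=
  let ⟨hp, hpX⟩ := mem_subResolution_iff.1 hp
  mem_geomReal_inter.2 ⟨hp.fst_mem_geomReal, hpX⟩

lemma blend_one_blendOneHomeomorph_symm (z : geomReal Y) :
    blend 1 ((blendOneHomeomorph Y).symm z : (V → ℝ) × (Finset V → ℝ)) = z :=
  congrArg Subtype.val ((blendOneHomeomorph Y).apply_symm_apply z)

lemma supp_blend_subset_of_blendOneHomeomorph_symm (z : geomReal Y) (t : ℝ) :
    supp (blend t ((blendOneHomeomorph Y).symm z : (V → ℝ) × (Finset V → ℝ))) ⊆ supp z := by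
  have hp := mem_resolution_iff.1 ((blendOneHomeomorph Y).symm z).2
  rw [← blend_one_blendOneHomeomorph_symm z, hp.supp_blend_one]
  exact supp_blend_subset t _

lemma blendOneHomeomorph_symm_mem_subResolution {z : geomReal Y}
    (hz : (z : V → ℝ) ∈ geomReal (X.inter Y)) :
    ((blendOneHomeomorph Y).symm z : (V → ℝ) × (Finset V → ℝ)) ∈ subResolution X Y := by
  refine mem_subResolution_iff.2 ⟨mem_resolution_iff.1 ((blendOneHomeomorph Y).symm z).2,
    X.down_closed (mem_geomReal_inter.1 hz).2 ?_⟩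
  simpa [blend_zero] using supp_blend_subset_of_blendOneHomeomorph_symm z 0

lemma blendOneHomeomorph_symm_blendHomotopy_mem_subResolution (t : unitInterval)
    {p : resolution Y} (hp : (p : (V → ℝ) × (Finset V → ℝ)) ∈ subResolution X Y) :
    ((blendOneHomeomorph Y).symm (blendHomotopy Y (t, p)) : (V → ℝ) × (Finset V → ℝ)) ∈
      subResolution X Y := by
  obtain ⟨hp, hpX⟩ := mem_subResolution_iff.1 hp
  have hq := mem_resolution_iff.1 ((blendOneHomeomorph Y).symm (blendHomotopy Y (t, p))).2
  exact mem_subResolution_iff.2 ⟨hq, X.down_closed hpX (hp.supp_fst_subset_of_blend_eq hq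
    t.2.1 t.2.2 (blend_one_blendOneHomeomorph_symm _))⟩

lemma blendHomotopy_blendOneHomeomorph_symm_mem_geomReal_inter (t : unitInterval)
    {z : geomReal Y} (hz : (z : V → ℝ) ∈ geomReal (X.inter Y)) :
    (blendHomotopy Y (t, (blendOneHomeomorph Y).symm z) : V → ℝ) ∈ geomReal (X.inter Y) :=
  mem_geomReal_inter.2 ⟨Subtype.prop _,
    X.down_closed (mem_geomReal_inter.1 hz).2 (supp_blend_subset_of_blendOneHomeomorph_symm z t)⟩

end SubResolution

end SComplex

open SComplex in
/-- **Lemma (simplicial resolution).** Let `X, Y` be simplicial complexes on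
the same vertex set `V`, let `Δ` be the full simplex on `V`, and set (inside
`|Y| × |sd(Y)|`) `K' = ⋃_{σ ∈ Y} |Δ[σ]| × |D_Y(σ)|` and
`L = ⋃_{σ ∈ Y} |X[σ]| × |D_Y(σ)|`.  Then the first-coordinate projection
`π : K' → |Y|` is a homotopy equivalence, and so is its restriction
`π|_L : L → |X ∩ Y|`.  (Note `Δ[σ]` is the full simplex on `σ`.) -/
theorem projection_homotopy_equiv {V : Type} [DecidableEq V] [Fintype V]
    (X Y : SComplex V) :
    (∃ he : ContinuousMap.HomotopyEquiv
        (↥(⋃ σ ∈ Y.faces, (geomReal (simplexOn σ)) ×ˢ (geomReal (Y.dualCell σ))))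
        (↥(geomReal Y)),
      ∀ p, (he.toFun p : V → ℝ) =
        (p : ((V → ℝ) × ((Finset V) → ℝ))).1) ∧
    (∃ he : ContinuousMap.HomotopyEquiv
        (↥(⋃ σ ∈ Y.faces, (geomReal (X.induced σ)) ×ˢ (geomReal (Y.dualCell σ))))
        (↥(geomReal (X.inter Y))),
      ∀ p, (he.toFun p : V → ℝ) =
        (p : ((V → ℝ) × ((Finset V) → ℝ))).1) := by
  constructor
  · exact ⟨(blendHomotopy Y).restrictHomotopyEquiv subset_rfl subset_rfl
      (fun p _ => (resolutionFst Y p).2) (fun z _ => ((blendOneHomeomorph Y).symm z).2)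
      (fun _ _ _ => Subtype.prop _) (fun _ _ _ => Subtype.prop _), fun _ => rfl⟩
  · exact ⟨(blendHomotopy Y).restrictHomotopyEquiv subResolution_subset_resolution
      geomReal_inter_subset (fun _ => fst_mem_geomReal_inter)
      (fun _ => blendOneHomeomorph_symm_mem_subResolution)
      blendOneHomeomorph_symm_blendHomotopy_mem_subResolution
      blendHomotopy_blendOneHomeomorph_symm_mem_geomReal_inter, fun _ => rfl⟩
end
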